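/- arXiv:0707.0414 — 6 statements merged into one kernel-verified Lean document; each statement's English description precedes it below -/
import Mathlib

section
/- Let β ≥ 2 be an integer and define u(z) = (1−|z|²)^{2β−1}/|1−z|^{2β} for z ∈ 𝔻. Define a = Σ_{k=0}^{2β−2} Σ_{j=0}^{k} (−1)^j · C(2β−1, j) · C(k−j+β−1, β−1)² and b = − Σ_{k=1}^{2β−2} 2k · Σ_{j=0}^{k} (−1)^j · C(2β−1, j) · C(k−j+β−1, β−1)², where C(n,m) denotes the binomial coefficient. Then there exists a constant K > 0 such that | (1/(2π)) ∫₀^{2π} u(r e^{iθ}) dθ − a − b·(1−r) | ≤ K·(1−r)² for all r ∈ [0,1). -/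
open Real

/-- The building block function `u(z) = (1-|z|²)^(2β-1) / |1-z|^(2β)`. -/
noncomputable def bblock (β : ℕ) (z : ℂ) : ℝ :=
  (1 - ‖z‖ ^ 2) ^ (2 * β - 1) / ‖1 - z‖ ^ (2 * β)

/-- `a = Σ_{k=0}^{2β-2} Σ_{j=0}^{k} (−1)^j C(2β−1,j) C(k−j+β−1,β−1)²`. -/
noncomputable def aCoef (β : ℕ) : ℝ :=
  ∑ k ∈ Finset.range (2 * β - 1), ∑ j ∈ Finset.range (k + 1),
    (-1 : ℝ) ^ j * (Nat.choose (2 * β - 1) j : ℝ) *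
      (Nat.choose (k - j + β - 1) (β - 1) : ℝ) ^ 2

/-- `b = −Σ_{k=1}^{2β-2} 2k Σ_{j=0}^{k} (−1)^j C(2β−1,j) C(k−j+β−1,β−1)²`. -/
noncomputable def bCoef (β : ℕ) : ℝ :=
  -∑ k ∈ Finset.Icc 1 (2 * β - 2), (2 * k : ℝ) *
    ∑ j ∈ Finset.range (k + 1),
      (-1 : ℝ) ^ j * (Nat.choose (2 * β - 1) j : ℝ) *
        (Nat.choose (k - j + β - 1) (β - 1) : ℝ) ^ 2

/-!
Since `(1 - z)^(-β) = Σ C(n+β-1, β-1) zⁿ`, Parseval's identity on the circle of radius `r` gives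
`(1/2π) ∫ u(r e^{iθ}) dθ = (1 - x)^(2β-1) Σ C(n+β-1, β-1)² xⁿ` with `x = r²`. Multiplying the
series by `(1 - x)^(2β-1)` takes a `(2β-1)`-fold finite difference of its coefficients, which are a
polynomial of degree `2β-2` in `n`; hence all coefficients from `x^(2β-1)` on vanish and the mean
is a polynomial `Σ c_k r^(2k)` (`c_k = bblockCoeff β k`). Its value and derivative at `r = 1`
are `a` and `-b`, and the second-order Taylor remainder of each `r^(2k)` at `1` is `O((1-r)²)`.
-/

open Finset Polynomial Complex ComplexConjugate

theorem Polynomial.sum_range_alternating_choose_mul_eval_sub_eq_zero {R : Type*} [CommRing R]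
    (P : R[X]) {n : ℕ} (hP : P.natDegree < n) (x : R) :
    ∑ j ∈ range (n + 1), (-1) ^ j * (n.choose j : R) * P.eval (x - j) = 0 := by
  have h := fwdDiff_iter_eq_sum_shift (1 : R) P.eval n (x - n)
  rw [P.fwdDiff_iter_eq_zero_of_degree_lt hP, Pi.zero_apply] at h
  rw [h, ← sum_range_reflect]
  refine sum_congr rfl fun j hj => ?_
  have hj : j ≤ n := Nat.lt_succ_iff.mp (mem_range.mp hj)
  rw [Nat.add_sub_cancel, Nat.choose_symm hj, nsmul_one, Nat.cast_sub hj, zsmul_eq_mul]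
  push_cast
  ring_nf

theorem Polynomial.exists_natDegree_le_eval_eq_choose_add {K : Type*} [Field K] [CharZero K]
    (d : ℕ) : ∃ P : K[X], P.natDegree ≤ d ∧ ∀ n : ℕ, P.eval (n : K) = ((n + d).choose d : K) := by
  refine ⟨C (d.factorial : K)⁻¹ * (descPochhammer K d).comp (X + C (d : K)), ?_, fun n => ?_⟩
  · refine (natDegree_C_mul_le _ _).trans ?_
    rw [natDegree_comp, descPochhammer_natDegree, natDegree_X_add_C, mul_one]
  · rw [Nat.cast_choose_eq_descPochhammer_div]
    simp [div_eq_inv_mul]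

section AlternatingConv

variable {R : Type*} [CommRing R]

/-- The coefficients of `(1 - x)^m * Σ g n xⁿ`, i.e. the `m`-th backward difference of `g`
extended by zero to negative indices. -/
def alternatingConv (m : ℕ) (g : ℕ → R) (k : ℕ) : R :=
  ∑ j ∈ range (k + 1), (-1) ^ j * (m.choose j : R) * g (k - j)

theorem alternatingConv_eq_zero_of_eq_eval {m k : ℕ} {g : ℕ → R} (P : R[X])
    (hP : P.natDegree < m) (hg : ∀ n : ℕ, g n = P.eval (n : R)) (hk : m ≤ k) :
    alternatingConv m g k = 0 := by
  rw [alternatingConv, ← sum_subset (range_subset_range.mpr (Nat.succ_le_succ hk))]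
  · rw [← P.sum_range_alternating_choose_mul_eval_sub_eq_zero hP (k : R)]
    refine sum_congr rfl fun j hj => ?_
    rw [hg, Nat.cast_sub (by have := mem_range.mp hj; omega)]
  · intro j _ hj
    rw [Nat.choose_eq_zero_of_lt (by simpa using hj), Nat.cast_zero, mul_zero, zero_mul]

end AlternatingConv

theorem hasSum_alternatingConv_mul_pow {R : Type*} [NormedCommRing R] [CompleteSpace R]
    (m : ℕ) {g : ℕ → R} {x : R} (hg : Summable fun n => ‖g n * x ^ n‖) :
    HasSum (fun k => alternatingConv m g k * x ^ k) ((1 - x) ^ m * ∑' n, g n * x ^ n) := by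
  set f : ℕ → R := fun j => (-1) ^ j * (m.choose j : R) * x ^ j
  have hf : ∀ j ∉ range (m + 1), f j = 0 := fun j hj => by
    simp [f, Nat.choose_eq_zero_of_lt (by simpa using hj : m < j)]
  have hf_tsum : ∑' j, f j = (1 - x) ^ m := by
    rw [tsum_eq_sum hf, sub_eq_neg_add, add_pow]
    refine sum_congr rfl fun j _ => ?_
    rw [neg_pow, one_pow, mul_one]
    ring
  have hconv := hasSum_sum_range_mul_of_summable_norm (f := f)
    (summable_of_ne_finset_zero fun j hj => by rw [hf j hj, norm_zero]) hg
  rw [hf_tsum] at hconv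
  refine hconv.congr_fun fun k => ?_
  rw [alternatingConv, sum_mul]
  refine sum_congr rfl fun j hj => ?_
  have hjk : j + (k - j) = k := Nat.add_sub_cancel' (Nat.lt_succ_iff.mp (mem_range.mp hj))
  simp only [f]
  rw [← hjk, pow_add, hjk]
  ring

theorem summable_sq_of_summable_abs {ι : Type*} {b : ι → ℝ} (hb : Summable fun i => |b i|) :
    Summable fun i => b i ^ 2 := by
  have hdiag : Function.Injective fun i : ι => (i, i) := fun _ _ h => congrArg Prod.fst h
  simpa only [sq, Function.comp_def] using
    (summable_mul_of_summable_norm (f := b) (g := b) hb hb).comp_injective hdiag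

theorem hasSum_re_mul_conj_norm_sq {ι : Type*} {e : ι → ℂ} (he : Summable fun i => ‖e i‖) :
    HasSum (fun p : ι × ι => (e p.1 * conj (e p.2)).re) (‖∑' i, e i‖ ^ 2) := by
  have hprod := he.of_norm.hasSum.mul he.of_norm.hasSum.star
    (summable_mul_of_summable_norm (f := e) (g := fun i => star (e i)) he
      (by simpa only [norm_star] using he))
  rw [Complex.star_def, mul_conj, normSq_eq_norm_sq] at hprod
  simpa only [reCLM_apply, ofReal_re] using reCLM.hasSum hprod

theorem hasSum_mul_cos_norm_sq (b : ℕ → ℝ) (hb : Summable fun n => |b n|) (θ : ℝ) :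
    HasSum (fun p : ℕ × ℕ => b p.1 * b p.2 * Real.cos ((p.1 - p.2 : ℝ) * θ))
      (‖∑' n, (b n : ℂ) * exp (n * θ * I)‖ ^ 2) := by
  have he : ∀ n : ℕ, ‖(b n : ℂ) * exp (n * θ * I)‖ = |b n| := fun n => by
    rw [norm_mul, norm_real, Real.norm_eq_abs, ← ofReal_natCast, ← ofReal_mul,
      norm_exp_ofReal_mul_I, mul_one]
  refine (hasSum_re_mul_conj_norm_sq (by simpa only [he] using hb)).congr_fun fun p => ?_
  have hprod : (b p.1 : ℂ) * exp (p.1 * θ * I) * conj ((b p.2 : ℂ) * exp (p.2 * θ * I)) =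
      ((b p.1 * b p.2 : ℝ) : ℂ) * exp (((p.1 - p.2 : ℝ) * θ : ℝ) * I) := by
    rw [map_mul, conj_ofReal, ← exp_conj, map_mul, map_mul, conj_I, conj_natCast, conj_ofReal]
    push_cast
    rw [mul_mul_mul_comm, ← Complex.exp_add]
    ring_nf
  rw [hprod, re_ofReal_mul, exp_ofReal_mul_I_re]

theorem integral_cos_natCast_sub_mul (n m : ℕ) :
    ∫ θ in (0 : ℝ)..2 * π, Real.cos ((n - m : ℝ) * θ) = if n = m then 2 * π else 0 := by
  split_ifs with h
  · simp [h]
  · have hnm : (n - m : ℝ) ≠ 0 := sub_ne_zero.mpr (Nat.cast_injective.ne h)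
    rw [intervalIntegral.integral_comp_mul_left _ hnm, integral_cos, mul_zero, Real.sin_zero,
      show (n - m : ℝ) * (2 * π) = ((2 * ((n : ℤ) - m) : ℤ) : ℝ) * π by push_cast; ring,
      Real.sin_int_mul_pi, sub_zero, smul_zero]

theorem integral_norm_sq_tsum_mul_exp (b : ℕ → ℝ) (hb : Summable fun n => |b n|) :
    ∫ θ in (0 : ℝ)..2 * π, ‖∑' n, (b n : ℂ) * exp (n * θ * I)‖ ^ 2 =
      2 * π * ∑' n, b n ^ 2 := by
  have hb' : Summable fun n => ‖b n‖ := hb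
  have hint := intervalIntegral.hasSum_integral_of_dominated_convergence
    (F := fun (p : ℕ × ℕ) θ => b p.1 * b p.2 * Real.cos ((p.1 - p.2 : ℝ) * θ))
    (μ := MeasureTheory.volume) (a := 0) (b := 2 * π)
    (fun p _ => ‖b p.1 * b p.2‖)
    (fun p => by fun_prop)
    (fun p => MeasureTheory.ae_of_all _ fun θ _ => by
      rw [norm_mul (b p.1 * b p.2)]
      exact mul_le_of_le_one_right (norm_nonneg _) (by simpa using Real.abs_cos_le_one _))
    (MeasureTheory.ae_of_all _ fun _ _ => hb'.mul_norm hb')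
    intervalIntegrable_const
    (MeasureTheory.ae_of_all _ fun θ _ => hasSum_mul_cos_norm_sq b hb θ)
  simp only [intervalIntegral.integral_const_mul, integral_cos_natCast_sub_mul, mul_ite,
    mul_zero] at hint
  refine hint.unique ?_
  have hdiag : Function.Injective fun n : ℕ => (n, n) := fun _ _ h => congrArg Prod.fst h
  rw [← hdiag.hasSum_iff fun p hp => if_neg fun h => hp ⟨p.1, Prod.ext rfl h⟩]
  refine ((summable_sq_of_summable_abs hb).hasSum.mul_left (2 * π)).congr_fun fun n => ?_
  simp only [Function.comp_apply, if_true, sq]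
  ring

theorem summable_abs_choose_mul_pow (d : ℕ) {r : ℝ} (hr0 : 0 ≤ r) (hr1 : r < 1) :
    Summable fun n => |((n + d).choose d * r ^ n : ℝ)| := by
  refine (summable_choose_mul_geometric_of_norm_lt_one (r := r) d ?_).congr fun n => ?_
  · rwa [Real.norm_of_nonneg hr0]
  · exact (abs_of_nonneg (by positivity)).symm

theorem norm_sq_tsum_choose_mul_pow (d : ℕ) {r : ℝ} (hr0 : 0 ≤ r) (hr1 : r < 1) (θ : ℝ) :
    ‖∑' n, (((n + d).choose d * r ^ n : ℝ) : ℂ) * exp (n * θ * I)‖ ^ 2 =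
      (‖1 - r * exp (θ * I)‖ ^ (2 * (d + 1)))⁻¹ := by
  have hz : ‖(r : ℂ) * exp (θ * I)‖ = r := by
    rw [norm_mul, norm_real, norm_exp_ofReal_mul_I, mul_one, Real.norm_of_nonneg hr0]
  have hsum := hasSum_choose_mul_geometric_of_norm_lt_one d (hz.trans_lt hr1)
  have hterm : ∀ n : ℕ, (((n + d).choose d * r ^ n : ℝ) : ℂ) * exp (n * θ * I) =
      (n + d).choose d * (r * exp (θ * I)) ^ n := fun n => by
    rw [mul_pow, ← Complex.exp_nat_mul]
    push_cast
    ring_nf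
  rw [tsum_congr hterm, hsum.tsum_eq, norm_div, norm_one, norm_pow, one_div, inv_pow, ← pow_mul,
    mul_comm 2]

theorem circleMean_bblock_succ (d : ℕ) {r : ℝ} (hr0 : 0 ≤ r) (hr1 : r < 1) :
    1 / (2 * π) * ∫ θ in (0 : ℝ)..2 * π, bblock (d + 1) (r * exp (θ * I)) =
      (1 - r ^ 2) ^ (2 * (d + 1) - 1) * ∑' n, ((n + d).choose d : ℝ) ^ 2 * (r ^ 2) ^ n := by
  have hpt : ∀ θ : ℝ, bblock (d + 1) (r * exp (θ * I)) = (1 - r ^ 2) ^ (2 * (d + 1) - 1) *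
      ‖∑' n, (((n + d).choose d * r ^ n : ℝ) : ℂ) * exp (n * θ * I)‖ ^ 2 := fun θ => by
    rw [norm_sq_tsum_choose_mul_pow d hr0 hr1, bblock, norm_mul, norm_real, norm_exp_ofReal_mul_I,
      mul_one, Real.norm_of_nonneg hr0, div_eq_mul_inv]
  simp_rw [hpt]
  rw [intervalIntegral.integral_const_mul,
    integral_norm_sq_tsum_mul_exp _ (summable_abs_choose_mul_pow d hr0 hr1)]
  simp_rw [mul_pow, ← pow_mul, mul_comm _ 2]
  field_simp

noncomputable def bblockCoeff (β : ℕ) : ℕ → ℝ :=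
  alternatingConv (2 * β - 1) fun n => ((n + β - 1).choose (β - 1) : ℝ) ^ 2

theorem bblockCoeff_succ (d : ℕ) :
    bblockCoeff (d + 1) = alternatingConv (2 * (d + 1) - 1) fun n => ((n + d).choose d : ℝ) ^ 2 :=
  rfl

theorem bblockCoeff_eq_zero {β k : ℕ} (hβ : 1 ≤ β) (hk : 2 * β - 1 ≤ k) : bblockCoeff β k = 0 := by
  obtain ⟨P, hPdeg, hP⟩ := exists_natDegree_le_eval_eq_choose_add (K := ℝ) (β - 1)
  refine alternatingConv_eq_zero_of_eq_eval (P ^ 2) (natDegree_pow_le.trans_lt (by omega))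
    (fun n => ?_) hk
  rw [eval_pow, hP, Nat.add_sub_assoc hβ]

theorem circleMean_bblock_eq_sum {β : ℕ} (hβ : 1 ≤ β) {r : ℝ} (hr0 : 0 ≤ r) (hr1 : r < 1) :
    1 / (2 * π) * ∫ θ in (0 : ℝ)..2 * π, bblock β (r * exp (θ * I)) =
      ∑ k ∈ range (2 * β - 1), bblockCoeff β k * r ^ (2 * k) := by
  obtain ⟨d, rfl⟩ : ∃ d, β = d + 1 := ⟨β - 1, by omega⟩
  have hsum : Summable fun n => ‖((n + d).choose d : ℝ) ^ 2 * (r ^ 2) ^ n‖ := by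
    refine (summable_sq_of_summable_abs (summable_abs_choose_mul_pow d hr0 hr1)).congr fun n => ?_
    rw [Real.norm_eq_abs, abs_of_nonneg (by positivity)]
    ring
  rw [circleMean_bblock_succ d hr0 hr1, ← (hasSum_alternatingConv_mul_pow _ hsum).tsum_eq,
    ← bblockCoeff_succ, tsum_eq_sum fun k hk => by
      rw [bblockCoeff_eq_zero hβ (not_lt.mp (mem_range.not.mp hk)), zero_mul]]
  simp_rw [pow_mul]

theorem aCoef_eq_sum_bblockCoeff (β : ℕ) :
    aCoef β = ∑ k ∈ range (2 * β - 1), bblockCoeff β k :=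
  rfl

theorem bCoef_eq_sum_bblockCoeff (β : ℕ) :
    bCoef β = -∑ k ∈ range (2 * β - 1), ((2 * k : ℕ) : ℝ) * bblockCoeff β k := by
  have hsub : Icc 1 (2 * β - 2) ⊆ range (2 * β - 1) := fun k hk => by
    simp only [mem_Icc, mem_range] at hk ⊢
    omega
  rw [bCoef, ← sum_subset hsub fun k hk hk' => ?_]
  · push_cast
    rfl
  · obtain rfl : k = 0 := by simp only [mem_Icc, mem_range] at hk hk'; omega
    simp

theorem abs_pow_sub_one_add_mul_le {x : ℝ} (hx0 : 0 ≤ x) (hx1 : x ≤ 1) (n : ℕ) :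
    |x ^ n - 1 + n * (1 - x)| ≤ (n : ℝ) ^ 2 * (1 - x) ^ 2 := by
  have hgeom : x ^ n - 1 + n * (1 - x) = (1 - x) * ∑ i ∈ range n, (1 - x ^ i) := by
    rw [sum_sub_distrib, sum_const, card_range, nsmul_one]
    linear_combination (-1 : ℝ) * geom_sum_mul x n
  have hterm : ∀ i ∈ range n, 0 ≤ 1 - x ^ i ∧ 1 - x ^ i ≤ n * (1 - x) := fun i hi => by
    have hin : (i : ℝ) ≤ n := by exact_mod_cast (mem_range.mp hi).le
    have hbern := one_add_mul_le_pow (a := x - 1) (by linarith) i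
    rw [add_sub_cancel] at hbern
    exact ⟨sub_nonneg.mpr (pow_le_one₀ hx0 hx1), by nlinarith⟩
  have hsum : ∑ i ∈ range n, (1 - x ^ i) ≤ n * (n * (1 - x)) := by
    simpa using sum_le_sum fun i hi => (hterm i hi).2
  rw [hgeom, abs_of_nonneg (mul_nonneg (by linarith) (sum_nonneg fun i hi => (hterm i hi).1))]
  nlinarith

theorem abs_sum_mul_pow_sub_le {ι : Type*} (s : Finset ι) (c : ι → ℝ) (e : ι → ℕ) {x : ℝ}
    (hx0 : 0 ≤ x) (hx1 : x ≤ 1) :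
    |∑ i ∈ s, c i * (x ^ e i - 1 + e i * (1 - x))| ≤
      (∑ i ∈ s, |c i| * (e i : ℝ) ^ 2) * (1 - x) ^ 2 := by
  rw [sum_mul]
  refine (abs_sum_le_sum_abs _ _).trans (sum_le_sum fun i _ => ?_)
  rw [abs_mul, mul_assoc]
  exact mul_le_mul_of_nonneg_left (abs_pow_sub_one_add_mul_le hx0 hx1 _) (abs_nonneg _)

theorem stmt1 (β : ℕ) (hβ : 2 ≤ β) :
    ∃ K > 0, ∀ r ∈ Set.Ico (0 : ℝ) 1,
      |(1 / (2 * π)) *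
          (∫ θ in (0 : ℝ)..(2 * π),
            bblock β ((r : ℂ) * Complex.exp ((θ : ℂ) * Complex.I)))
        - aCoef β - bCoef β * (1 - r)| ≤ K * (1 - r) ^ 2 := by
  refine ⟨∑ k ∈ range (2 * β - 1), |bblockCoeff β k| * ((2 * k : ℕ) : ℝ) ^ 2 + 1, by positivity,
    fun r ⟨hr0, hr1⟩ => ?_⟩
  have hexpand : 1 / (2 * π) * (∫ θ in (0 : ℝ)..2 * π, bblock β (r * exp (θ * I))) - aCoef β -
      bCoef β * (1 - r) =
      ∑ k ∈ range (2 * β - 1), bblockCoeff β k * (r ^ (2 * k) - 1 + (2 * k : ℕ) * (1 - r)) := by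
    rw [circleMean_bblock_eq_sum (by omega) hr0 hr1, aCoef_eq_sum_bblockCoeff,
      bCoef_eq_sum_bblockCoeff, neg_mul, sub_neg_eq_add, sum_mul, ← sum_sub_distrib,
      ← sum_add_distrib]
    exact sum_congr rfl fun k _ => by ring
  rw [hexpand]
  refine (abs_sum_mul_pow_sub_le _ _ (fun k => 2 * k) hr0 hr1.le).trans ?_
  gcongr
  linarith
end

section
/- Let β ≥ 2 be an integer and define u(z) = (1−|z|²)^{2β−1}/|1−z|^{2β} for z ∈ 𝔻. Then for every r ∈ [0,1) one has the exact formula (1/(2π)) ∫₀^{2π} u(r e^{iθ}) dθ = Σ_{k=0}^{2β−2} ( Σ_{j=0}^{k} (−1)^j · C(2β−1, j) · C(k−j+β−1, β−1)² ) · r^{2k}. In particular the integral means of u are a polynomial in r² of degree at most 2β−2. -/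
/-!
With `s = β - 1`, `|1 - z|^(-2β) = |f z|²` for `f z = (1 - z)^(-β) = ∑ C(n+s, s) zⁿ`, so by
Parseval the circle mean of `u` is `(1 - r²)^(2s+1) ∑ C(n+s, s)² r^(2n)`. The coefficients
`C(n+s, s)²` are a polynomial of degree `2s` in `n`, so multiplying their generating function by
`(1 - x)^(2s+1)` kills every coefficient from `x^(2s+1)` on: these coefficients are
`(2s+1)`-st finite differences of that polynomial.
-/

open Real

open Finset Polynomial

section PolynomialSequence

theorem sum_range_alternating_choose_mul_eval_eq_zero {R : Type*} [CommRing R] (P : R[X])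
    {N k : ℕ} (hP : P.natDegree < N) (hk : N ≤ k) :
    ∑ j ∈ range (k + 1), (-1 : R) ^ j * N.choose j * P.eval ((k - j : ℕ) : R) = 0 := by
  -- The sum is the `N`-th forward difference of `P` at `k - N`, read backwards.
  have h := congr_fun (fwdDiff_iter_eq_zero_of_degree_lt hP) ((k - N : ℕ) : R)
  rw [fwdDiff_iter_eq_sum_shift, Pi.zero_apply, ← sum_range_reflect] at h
  rw [← sum_subset (range_subset_range.2 (by omega : N + 1 ≤ k + 1)), ← h]
  · refine sum_congr rfl fun j hj => ?_
    have hjN : j ≤ N := Nat.lt_succ_iff.1 (mem_range.1 hj)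
    rw [Nat.add_sub_cancel, Nat.sub_sub_self hjN, Nat.choose_symm hjN, zsmul_eq_mul, nsmul_one,
      ← Nat.cast_add, Nat.sub_add_sub_cancel hk hjN]
    push_cast
    rfl
  · intro j _ hj
    rw [Nat.choose_eq_zero_of_lt (by simpa using hj)]
    simp

theorem hasSum_one_sub_pow {R : Type*} [CommRing R] [TopologicalSpace R] (N : ℕ) (x : R) :
    HasSum (fun j => (-1 : R) ^ j * N.choose j * x ^ j) ((1 - x) ^ N) := by
  have hbinom : (1 - x) ^ N = ∑ j ∈ range (N + 1), (-1 : R) ^ j * N.choose j * x ^ j := by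
    rw [sub_eq_neg_add, add_pow]
    exact sum_congr rfl fun j _ => by rw [neg_pow]; ring
  rw [hbinom]
  refine hasSum_sum_of_ne_finset_zero fun j hj => ?_
  rw [Nat.choose_eq_zero_of_lt (by simpa using hj)]
  simp

variable {𝕜 : Type*} [RCLike 𝕜]

theorem summable_norm_eval_mul_pow (P : 𝕜[X]) {x : 𝕜} (hx : ‖x‖ < 1) :
    Summable fun n : ℕ => ‖P.eval (n : 𝕜) * x ^ n‖ := by
  refine summable_norm_iff.2 ?_
  simp_rw [eval_eq_sum_range, sum_mul, mul_assoc]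
  exact summable_sum fun i _ => (summable_pow_mul_geometric_of_norm_lt_one i hx).mul_left _

theorem one_sub_pow_mul_tsum_eval_mul_pow (P : 𝕜[X]) {N : ℕ} (hP : P.natDegree < N) {x : 𝕜}
    (hx : ‖x‖ < 1) :
    (1 - x) ^ N * ∑' n : ℕ, P.eval (n : 𝕜) * x ^ n =
      ∑ k ∈ range N,
        (∑ j ∈ range (k + 1), (-1 : 𝕜) ^ j * N.choose j * P.eval ((k - j : ℕ) : 𝕜)) * x ^ k := by
  have hcauchy : ∀ k, ∑ j ∈ range (k + 1),
      (-1 : 𝕜) ^ j * N.choose j * x ^ j * (P.eval ((k - j : ℕ) : 𝕜) * x ^ (k - j)) =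
        (∑ j ∈ range (k + 1), (-1 : 𝕜) ^ j * N.choose j * P.eval ((k - j : ℕ) : 𝕜)) * x ^ k := by
    intro k
    rw [sum_mul]
    refine sum_congr rfl fun j hj => ?_
    rw [← pow_mul_pow_sub x (Nat.lt_succ_iff.1 (mem_range.1 hj))]
    ring
  have hfinite : Summable fun j => ‖(-1 : 𝕜) ^ j * N.choose j * x ^ j‖ :=
    summable_of_ne_finset_zero (s := range (N + 1)) fun j hj => by
      rw [Nat.choose_eq_zero_of_lt (by simpa using hj)]
      simp
  rw [← (hasSum_one_sub_pow N x).tsum_eq, tsum_mul_tsum_eq_tsum_sum_range_of_summable_norm hfinite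
    (summable_norm_eval_mul_pow P hx), tsum_congr hcauchy]
  refine tsum_eq_sum fun k hk => ?_
  rw [sum_range_alternating_choose_mul_eval_eq_zero P hP (by simpa using hk), zero_mul]

end PolynomialSequence

theorem tsum_ite_fst_eq_snd {ι M : Type*} [DecidableEq ι] [AddCommMonoid M] [TopologicalSpace M]
    (f : ι → M) :
    ∑' p : ι × ι, (if p.1 = p.2 then f p.1 else 0) = ∑' i, f i := by
  refine (Function.Injective.tsum_eq (g := fun i => (i, i)) (fun i j h => congrArg Prod.fst h)
    fun p hp => ?_).symm.trans (tsum_congr fun i => if_pos rfl)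
  exact ⟨p.1, Prod.ext rfl (by_contra fun h => hp (if_neg h))⟩

section CircleMeans

open ComplexConjugate

theorem integral_exp_int_mul_mul_I (d : ℤ) :
    ∫ θ in (0 : ℝ)..2 * π, Complex.exp (d * θ * Complex.I) =
      if d = 0 then (2 * π : ℂ) else 0 := by
  split_ifs with hd
  · simp [hd]
  · have hc : (d : ℂ) * Complex.I ≠ 0 := mul_ne_zero (by exact_mod_cast hd) Complex.I_ne_zero
    simp_rw [mul_right_comm _ _ Complex.I]
    rw [integral_exp_mul_complex hc]
    have hperiod : (d : ℂ) * Complex.I * ((2 * π : ℝ) : ℂ) = d * (2 * π * Complex.I) := by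
      push_cast; ring
    simp only [Complex.ofReal_zero, mul_zero, Complex.exp_zero, hperiod,
      Complex.exp_int_mul_two_pi_mul_I, sub_self, zero_div]

theorem pow_mul_conj_pow_circle (r θ : ℝ) (n m : ℕ) :
    ((r : ℂ) * Complex.exp (θ * Complex.I)) ^ n *
        conj (((r : ℂ) * Complex.exp (θ * Complex.I)) ^ m) =
      r ^ (n + m) * Complex.exp (((n : ℤ) - m : ℤ) * θ * Complex.I) := by
  have hconj :
      conj ((r : ℂ) * Complex.exp (θ * Complex.I)) = r * Complex.exp (-(θ * Complex.I)) := by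
    rw [map_mul, ← Complex.exp_conj, map_mul, Complex.conj_ofReal, Complex.conj_ofReal,
      Complex.conj_I, mul_neg]
  have hexp : Complex.exp (((n : ℤ) - m : ℤ) * θ * Complex.I) =
      Complex.exp (θ * Complex.I) ^ n * Complex.exp (-(θ * Complex.I)) ^ m := by
    rw [← Complex.exp_nat_mul, ← Complex.exp_nat_mul, ← Complex.exp_add]
    push_cast
    ring_nf
  rw [map_pow, hconj, hexp]
  ring

theorem integral_norm_tsum_mul_pow_sq (a : ℕ → ℂ) {r : ℝ} (hr : 0 ≤ r)
    (ha : Summable fun n => ‖a n‖ * r ^ n) :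
    ∫ θ in (0 : ℝ)..2 * π, ‖∑' n, a n * ((r : ℂ) * Complex.exp (θ * Complex.I)) ^ n‖ ^ 2 =
      2 * π * ∑' n, ‖a n‖ ^ 2 * r ^ (2 * n) := by
  set z : ℝ → ℂ := fun θ => (r : ℂ) * Complex.exp (θ * Complex.I) with hz
  set F : ℕ × ℕ → ℝ → ℂ := fun p θ =>
    a p.1 * conj (a p.2) * r ^ (p.1 + p.2) * Complex.exp (((p.1 : ℤ) - p.2 : ℤ) * θ * Complex.I)
  have hnorm_z : ∀ θ, ‖z θ‖ = r := fun θ => by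
    rw [hz, norm_mul, Complex.norm_exp_ofReal_mul_I, mul_one, Complex.norm_real, norm_of_nonneg hr]
  have hnormF : ∀ p θ, ‖F p θ‖ = ‖a p.1‖ * r ^ p.1 * (‖a p.2‖ * r ^ p.2) := fun p θ => by
    simp only [F, norm_mul, norm_pow, Complex.norm_real, norm_of_nonneg hr, Complex.norm_conj,
      ← Complex.ofReal_intCast, Complex.norm_exp_ofReal_mul_I, ← Complex.ofReal_mul, mul_one,
      pow_add]
    ring
  have hprod : Summable fun p : ℕ × ℕ => ‖a p.1‖ * r ^ p.1 * (‖a p.2‖ * r ^ p.2) :=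
    ha.mul_of_nonneg ha (fun n => by positivity) (fun n => by positivity)
  have hpoint : ∀ θ, ((‖∑' n, a n * z θ ^ n‖ ^ 2 : ℝ) : ℂ) = ∑' p, F p θ := fun θ => by
    have hs : Summable fun n => ‖a n * z θ ^ n‖ := ha.congr fun n => by
      rw [norm_mul, norm_pow, hnorm_z]
    rw [Complex.ofReal_pow, ← Complex.mul_conj', Complex.conj_tsum,
      tsum_mul_tsum_of_summable_norm hs (by simpa using hs)]
    refine tsum_congr fun p => ?_
    rw [map_mul, mul_mul_mul_comm, pow_mul_conj_pow_circle]
    ring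
  have hint : ∀ p : ℕ × ℕ, ∫ θ in (0 : ℝ)..2 * π, F p θ =
      if p.1 = p.2 then ((2 * π * (‖a p.1‖ ^ 2 * r ^ (2 * p.1)) : ℝ) : ℂ) else 0 := fun p => by
    rw [intervalIntegral.integral_const_mul, integral_exp_int_mul_mul_I]
    split_ifs with hd heq heq
    · rw [← heq, Complex.mul_conj', two_mul]
      push_cast
      ring
    · omega
    · omega
    · rw [mul_zero]
  have hswap : ∫ θ in (0 : ℝ)..2 * π, ∑' p, F p θ = ∑' p, ∫ θ in (0 : ℝ)..2 * π, F p θ := by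
    have hcont : ∀ p, Continuous (F p) := fun p => by fun_prop
    simp_rw [intervalIntegral.integral_of_le two_pi_pos.le]
    refine (MeasureTheory.integral_tsum_of_summable_integral_norm
      (fun p => (hcont p).integrableOn_Icc.mono_set Set.Ioc_subset_Icc_self) ?_).symm
    simp_rw [hnormF, MeasureTheory.setIntegral_const]
    exact hprod.const_smul _
  apply Complex.ofReal_injective
  rw [← intervalIntegral.integral_ofReal, intervalIntegral.integral_congr fun θ _ => hpoint θ,
    hswap, tsum_congr hint,
    tsum_ite_fst_eq_snd fun n => ((2 * π * (‖a n‖ ^ 2 * r ^ (2 * n)) : ℝ) : ℂ),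
    ← Complex.ofReal_tsum, tsum_mul_left]

end CircleMeans

theorem exists_natDegree_le_eval_eq_choose (K : Type*) [Field K] [CharZero K] (s : ℕ) :
    ∃ P : K[X], P.natDegree ≤ s ∧ ∀ n : ℕ, P.eval (n : K) = (n + s).choose s := by
  refine ⟨C (s.factorial : K)⁻¹ * (descPochhammer K s).comp (X + C (s : K)), ?_, fun n => ?_⟩
  · refine natDegree_C_mul_le _ _ |>.trans ?_
    rw [natDegree_comp, descPochhammer_natDegree, natDegree_X_add_C, mul_one]
  · rw [Nat.cast_choose_eq_descPochhammer_div, eval_mul, eval_C, eval_comp, eval_add, eval_X,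
      eval_C, Nat.cast_add, inv_mul_eq_div]

theorem bblock_succ_eq (s : ℕ) {z : ℂ} (hz : ‖z‖ < 1) :
    bblock (s + 1) z =
      (1 - ‖z‖ ^ 2) ^ (2 * s + 1) * ‖∑' n, ((n + s).choose s : ℂ) * z ^ n‖ ^ 2 := by
  rw [(hasSum_choose_mul_geometric_of_norm_lt_one s hz).tsum_eq, bblock,
    show 2 * (s + 1) - 1 = 2 * s + 1 by omega, norm_div, norm_one, norm_pow, div_pow, one_pow,
    ← pow_mul, mul_comm (s + 1), mul_one_div]

theorem integral_bblock_succ (s : ℕ) {r : ℝ} (hr₀ : 0 ≤ r) (hr₁ : r < 1) :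
    ∫ θ in (0 : ℝ)..2 * π, bblock (s + 1) ((r : ℂ) * Complex.exp (θ * Complex.I)) =
      2 * π * ((1 - r ^ 2) ^ (2 * s + 1) * ∑' n, ((n + s).choose s : ℝ) ^ 2 * (r ^ 2) ^ n) := by
  have hnorm : ∀ θ : ℝ, ‖(r : ℂ) * Complex.exp (θ * Complex.I)‖ = r := fun θ => by
    rw [norm_mul, Complex.norm_exp_ofReal_mul_I, mul_one, Complex.norm_real, norm_of_nonneg hr₀]
  have hsum : Summable fun n => ‖((n + s).choose s : ℂ)‖ * r ^ n := by
    simpa using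
      summable_choose_mul_geometric_of_norm_lt_one s (r := r) (by rwa [norm_of_nonneg hr₀])
  simp_rw [bblock_succ_eq s ((hnorm _).trans_lt hr₁), hnorm, intervalIntegral.integral_const_mul,
    integral_norm_tsum_mul_pow_sq _ hr₀ hsum, Complex.norm_natCast, pow_mul]
  ring

theorem stmt2 (β : ℕ) (hβ : 2 ≤ β) (r : ℝ) (hr : r ∈ Set.Ico (0 : ℝ) 1) :
    (1 / (2 * π)) *
        (∫ θ in (0 : ℝ)..(2 * π),
          bblock β ((r : ℂ) * Complex.exp ((θ : ℂ) * Complex.I)))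
      = ∑ k ∈ Finset.range (2 * β - 1),
          (∑ j ∈ Finset.range (k + 1),
            (-1 : ℝ) ^ j * (Nat.choose (2 * β - 1) j : ℝ) *
              (Nat.choose (k - j + β - 1) (β - 1) : ℝ) ^ 2) * r ^ (2 * k) := by
  obtain ⟨hr₀, hr₁⟩ := hr
  obtain ⟨s, rfl⟩ : ∃ s, β = s + 1 := ⟨β - 1, by omega⟩
  obtain ⟨P, hPdeg, hP⟩ := exists_natDegree_le_eval_eq_choose ℝ s
  have hdeg : (P ^ 2).natDegree < 2 * s + 1 := natDegree_pow_le.trans_lt (by omega)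
  have hx : ‖r ^ 2‖ < 1 := by
    rw [norm_pow, norm_of_nonneg hr₀]
    exact pow_lt_one₀ hr₀ hr₁ two_ne_zero
  have key := one_sub_pow_mul_tsum_eval_mul_pow (P ^ 2) hdeg hx
  simp only [eval_pow, hP] at key
  rw [integral_bblock_succ s hr₀ hr₁, ← mul_assoc, one_div_mul_cancel two_pi_pos.ne', one_mul, key,
    show 2 * (s + 1) - 1 = 2 * s + 1 by omega]
  refine sum_congr rfl fun k _ => ?_
  simp only [pow_mul, Nat.add_sub_cancel, show ∀ j, k - j + (s + 1) - 1 = k - j + s by omega]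
end

section
/- Let c : ℕ × ℕ → ℝ be a finitely supported function with c(α,β) = 0 whenever α = 0 or β = 0. If Σ_{α,β ≥ 1} c(α,β) · (1−|z|²)^{α} / |1−z|^{2β} = 0 for every z in the open unit disc 𝔻, then c(α,β) = 0 for all α, β. In other words, the functions z ↦ (1−|z|²)^{α}/|1−z|^{2β}, for integers α, β ≥ 1, are linearly independent over ℝ as functions on 𝔻. -/
/-!
With `t = 1 - |z|²` and `s = |1 - z|²`, the points of the disc realise every pair `(t, s)` of a
small open box, so the hypothesis says that the two-variable polynomial `∑ c(α, β) t^α u^β`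
vanishes for `t` and `u = s⁻¹` ranging over two infinite sets. Such a polynomial is zero.
-/

open Polynomial Set
open scoped Polynomial.Bivariate

theorem Polynomial.eq_zero_of_evalEval_eq_zero {R : Type*} [CommRing R] [IsDomain R]
    {A B : Set R} (hA : A.Infinite) (hB : B.Infinite) (p : R[X][Y])
    (h : ∀ x ∈ A, ∀ y ∈ B, p.evalEval x y = 0) : p = 0 := by
  have hmap : ∀ x ∈ A, p.map (evalRingHom x) = 0 := fun x hx =>
    eq_zero_of_infinite_isRoot _ <| hB.mono fun y hy => by
      simp only [mem_ofPred_eq, IsRoot.def, map_evalRingHom_eval, h x hx y hy]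
  ext n : 1
  refine eq_zero_of_infinite_isRoot _ <| hA.mono fun x hx => ?_
  simpa using congr_arg (coeff · n) (hmap x hx)

theorem eq_zero_of_finsum_mul_pow_mul_pow_eq_zero {R : Type*} [CommRing R] [IsDomain R]
    {c : ℕ × ℕ → R} (hc : (Function.support c).Finite) {A B : Set R} (hA : A.Infinite)
    (hB : B.Infinite) (h : ∀ x ∈ A, ∀ y ∈ B, ∑ᶠ p, c p * x ^ p.1 * y ^ p.2 = 0) : c = 0 := by
  set P : R[X][Y] := ∑ i ∈ hc.toFinset, monomial i.2 (monomial i.1 (c i))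
  have hcoeff : ∀ i : ℕ × ℕ, (P.coeff i.2).coeff i.1 = c i := by
    intro i
    simp only [P, finsetSum_coeff, coeff_monomial]
    rw [Finset.sum_eq_single i (fun b _ hb => ?_) (fun hi => ?_)]
    · simp
    · by_cases h2 : b.2 = i.2
      · rw [if_pos h2, coeff_monomial, if_neg fun h1 => hb (Prod.ext h1 h2)]
      · rw [if_neg h2, coeff_zero]
    · simpa using hi
  have hP : P = 0 := by
    refine eq_zero_of_evalEval_eq_zero hA hB P fun x hx y hy => ?_
    rw [← h x hx y hy, finsum_eq_sum_of_support_subset _ (s := hc.toFinset) ?_]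
    · simp [P, evalEval_finsetSum, evalEval, eval_monomial]
    · exact fun i hi => hc.mem_toFinset.2 fun hci => hi (by simp [hci])
  ext i
  simp [← hcoeff i, hP]

theorem exists_norm_lt_one_and_one_sub_norm_sq_eq_and_norm_one_sub_sq_eq {t s : ℝ} (ht : 0 < t)
    (hts : ((2 - t - s) / 2) ^ 2 ≤ 1 - t) :
    ∃ z : ℂ, ‖z‖ < 1 ∧ 1 - ‖z‖ ^ 2 = t ∧ ‖1 - z‖ ^ 2 = s := by
  -- `|1 - z|² = 1 - 2 Re z + |z|²` pins down `Re z`, and then `Im z` is fixed by `|z|`.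
  set x := (2 - t - s) / 2 with hx
  set y := √(1 - t - x ^ 2)
  have hy : y ^ 2 = 1 - t - x ^ 2 := Real.sq_sqrt (by linarith)
  have hz : ‖(⟨x, y⟩ : ℂ)‖ ^ 2 = 1 - t := by
    rw [Complex.sq_norm, Complex.normSq_mk]; linarith
  refine ⟨⟨x, y⟩, ?_, by linarith, ?_⟩
  · nlinarith [norm_nonneg (⟨x, y⟩ : ℂ)]
  · rw [Complex.sq_norm, Complex.normSq_apply]
    simp only [Complex.sub_re, Complex.sub_im, Complex.one_re, Complex.one_im]
    linear_combination hy - 2 * hx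

theorem stmt6_general (c : ℕ × ℕ → ℝ) (hfin : (Function.support c).Finite)
    (h : ∀ z : ℂ, ‖z‖ < 1 →
      (∑ᶠ p : ℕ × ℕ,
        c p * (1 - ‖z‖ ^ 2) ^ p.1 / ‖1 - z‖ ^ (2 * p.2)) = 0) :
    ∀ p : ℕ × ℕ, c p = 0 := by
  refine congr_fun <| eq_zero_of_finsum_mul_pow_mul_pow_eq_zero hfin
    (A := Ioo 0 (1 / 2)) (B := Inv.inv '' Ioo 1 (3 / 2)) (Ioo_infinite (by norm_num))
    ((Ioo_infinite (by norm_num)).image inv_injective.injOn) ?_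
  rintro t ⟨ht₀, ht₁⟩ _ ⟨s, ⟨hs₁, hs₂⟩, rfl⟩
  obtain ⟨z, hz, rfl, rfl⟩ :=
    exists_norm_lt_one_and_one_sub_norm_sq_eq_and_norm_one_sub_sq_eq (s := s) ht₀
      (by nlinarith)
  simpa [pow_mul, div_eq_mul_inv, inv_pow] using h z hz

theorem stmt6 (c : ℕ × ℕ → ℝ) (hfin : (Function.support c).Finite)
    (hzero : ∀ p : ℕ × ℕ, p.1 = 0 ∨ p.2 = 0 → c p = 0)
    (h : ∀ z : ℂ, ‖z‖ < 1 →
      (∑ᶠ p : ℕ × ℕ,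
        c p * (1 - ‖z‖ ^ 2) ^ p.1 / ‖1 - z‖ ^ (2 * p.2)) = 0) :
    ∀ p : ℕ × ℕ, c p = 0 :=
  stmt6_general c hfin h
end

section
/- Let β ≥ 1 be an integer, let f : [0,1) → ℝ be twice continuously differentiable, and define u(z) = f(|z|²)/|1−z|^{2β} for z ∈ 𝔻. Then for every z ∈ 𝔻, Δu(z) = (P_β f)(|z|²)/|1−z|^{2β} + (Q_β f)(|z|²)/|1−z|^{2(β+1)}. -/
/-!
Write `u = f(‖w‖²) · (‖w - 1‖²)^k` with `k = -β`. Its derivative along `v` is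
`2 (f' p^k ⟪v, w⟫ + k f p^(k-1) ⟪v, w - 1⟫)` with `p = ‖w - 1‖²`. Differentiating once more
along `v` gives a quadratic form in `v`, and summing it over the orthonormal basis `1, i`
replaces each product `⟪x, v⟫ ⟪y, v⟫` by `⟪x, y⟫`. The identity
`2 ⟪z, z - 1⟫ = ‖z‖² - 1 + ‖z - 1‖²` then regroups the result into `P_β f` and `Q_β f`.
-/

/-- The Laplacian `Δu = (1/4)(∂²u/∂x² + ∂²u/∂y²)` of a function `u : ℂ → ℝ`. -/
noncomputable def lap (u : ℂ → ℝ) (z : ℂ) : ℝ :=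
  (1 / 4) * (fderiv ℝ (fun w => fderiv ℝ u w 1) z 1 +
    fderiv ℝ (fun w => fderiv ℝ u w Complex.I) z Complex.I)

/-- `(P_β g)(x) = (1−β)g′(x) + x·g″(x)`, derivatives taken within `[0,1)`. -/
noncomputable def Pop (β : ℕ) (g : ℝ → ℝ) (x : ℝ) : ℝ :=
  ((1 : ℝ) - β) * derivWithin g (Set.Ico 0 1) x +
    x * derivWithin (fun y => derivWithin g (Set.Ico 0 1) y) (Set.Ico 0 1) x

/-- `(Q_β g)(x) = β(β·g(x) + (1−x)g′(x))`, derivative taken within `[0,1)`. -/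
noncomputable def Qop (β : ℕ) (g : ℝ → ℝ) (x : ℝ) : ℝ :=
  (β : ℝ) * ((β : ℝ) * g x + (1 - x) * derivWithin g (Set.Ico 0 1) x)

open Set Filter Topology RealInnerProductSpace

theorem sq_norm_mem_Ico {E : Type*} [SeminormedAddCommGroup E] {w : E} (hw : ‖w‖ < 1) :
    ‖w‖ ^ 2 ∈ Ico (0 : ℝ) 1 :=
  ⟨sq_nonneg _, pow_lt_one₀ (norm_nonneg w) hw two_ne_zero⟩

section InnerProductSpace

variable {E : Type*} [NormedAddCommGroup E] [InnerProductSpace ℝ E]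

theorem hasFDerivAt_comp_norm_sq {g : ℝ → ℝ} {g' : ℝ} {z : E}
    (hg : HasDerivWithinAt g g' (Ico 0 1) (‖z‖ ^ 2)) (hz : ‖z‖ < 1) :
    HasFDerivAt (fun w => g (‖w‖ ^ 2)) (g' • 2 • innerSL ℝ z) z :=
  hg.comp_hasFDerivAt z (hasStrictFDerivAt_norm_sq z).hasFDerivAt <|
    ((isOpen_lt continuous_norm continuous_const).eventually_mem hz).mono
      fun _ hw => sq_norm_mem_Ico hw

theorem hasFDerivAt_norm_sub_sq_zpow (a : E) (k : ℤ) {z : E} (hz : z ≠ a) :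
    HasFDerivAt (fun w => (‖w - a‖ ^ 2) ^ k)
      ((k * (‖z - a‖ ^ 2) ^ (k - 1)) • 2 • innerSL ℝ (z - a)) z := by
  have hne : ‖z - a‖ ^ 2 ≠ 0 := by simpa [sub_eq_zero] using hz
  have h := (hasDerivAt_zpow k _ (Or.inl hne)).comp_hasFDerivAt z
    ((hasFDerivAt_id z).sub_const a).norm_sq
  simp only [ContinuousLinearMap.comp_id, id] at h
  exact h

noncomputable def weightedRadial (f : ℝ → ℝ) (a : E) (k : ℤ) (w : E) : ℝ :=
  f (‖w‖ ^ 2) * (‖w - a‖ ^ 2) ^ k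

noncomputable def weightedRadialDirDeriv (f f' : ℝ → ℝ) (a : E) (k : ℤ) (v w : E) : ℝ :=
  2 * (f' (‖w‖ ^ 2) * (‖w - a‖ ^ 2) ^ k * ⟪v, w⟫ +
    k * f (‖w‖ ^ 2) * (‖w - a‖ ^ 2) ^ (k - 1) * ⟪v, w - a⟫)

theorem fderiv_weightedRadial_apply {f f' : ℝ → ℝ} {a z : E} (k : ℤ)
    (hf : HasDerivWithinAt f (f' (‖z‖ ^ 2)) (Ico 0 1) (‖z‖ ^ 2)) (hz : ‖z‖ < 1) (hza : z ≠ a)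
    (v : E) :
    fderiv ℝ (weightedRadial f a k) z v = weightedRadialDirDeriv f f' a k v z := by
  have h : HasFDerivAt (weightedRadial f a k) _ z :=
    (hasFDerivAt_comp_norm_sq hf hz).mul (hasFDerivAt_norm_sub_sq_zpow a k hza)
  rw [h.fderiv]
  simp only [add_apply, smul_apply, map_sub,
    sub_apply, coe_innerSL_apply, smul_eq_mul, nsmul_eq_mul, Nat.cast_ofNat,
    weightedRadialDirDeriv, real_inner_comm v, inner_sub_right]
  ring

theorem fderiv_weightedRadialDirDeriv_apply_self {f f' f'' : ℝ → ℝ} {a z : E} (k : ℤ)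
    (hf : HasDerivWithinAt f (f' (‖z‖ ^ 2)) (Ico 0 1) (‖z‖ ^ 2))
    (hf' : HasDerivWithinAt f' (f'' (‖z‖ ^ 2)) (Ico 0 1) (‖z‖ ^ 2)) (hz : ‖z‖ < 1)
    (hza : z ≠ a) (v : E) :
    fderiv ℝ (weightedRadialDirDeriv f f' a k v) z v =
      4 * (f'' (‖z‖ ^ 2) * (‖z - a‖ ^ 2) ^ k * ⟪z, v⟫ ^ 2 +
        2 * k * f' (‖z‖ ^ 2) * (‖z - a‖ ^ 2) ^ (k - 1) * ⟪z, v⟫ * ⟪z - a, v⟫ +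
        k * (k - 1) * f (‖z‖ ^ 2) * (‖z - a‖ ^ 2) ^ (k - 2) * ⟪z - a, v⟫ ^ 2) +
      2 * (f' (‖z‖ ^ 2) * (‖z - a‖ ^ 2) ^ k + k * f (‖z‖ ^ 2) * (‖z - a‖ ^ 2) ^ (k - 1)) *
        ‖v‖ ^ 2 := by
  have hv : HasFDerivAt (fun w => ⟪v, w⟫) (innerSL ℝ v) z := (innerSL ℝ v).hasFDerivAt
  have hva : HasFDerivAt (fun w => ⟪v, w - a⟫) (innerSL ℝ v) z :=
    (innerSL ℝ v).hasFDerivAt.comp z ((hasFDerivAt_id z).sub_const a)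
  have h : HasFDerivAt (weightedRadialDirDeriv f f' a k v) _ z :=
    ((((hasFDerivAt_comp_norm_sq hf' hz).mul (hasFDerivAt_norm_sub_sq_zpow a k hza)).mul hv).add
      ((((hasFDerivAt_comp_norm_sq hf hz).const_mul (k : ℝ)).mul
        (hasFDerivAt_norm_sub_sq_zpow a (k - 1) hza)).mul hva)).const_mul 2
  rw [h.fderiv, show k - 1 - 1 = k - 2 by ring]
  simp only [Pi.mul_apply, add_apply, smul_apply,
    map_sub, sub_apply, coe_innerSL_apply, real_inner_self_eq_norm_sq,
    smul_eq_mul, nsmul_eq_mul, Nat.cast_ofNat, Int.cast_sub, Int.cast_one, real_inner_comm v,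
    inner_sub_right]
  ring

end InnerProductSpace

theorem lap_eq_of_eventually_fderiv_eq {u : ℂ → ℝ} {G : ℂ → ℂ → ℝ} {z : ℂ}
    (h : ∀ᶠ w in 𝓝 z, ∀ v, fderiv ℝ u w v = G v w) :
    lap u z = 1 / 4 * (fderiv ℝ (G 1) z 1 + fderiv ℝ (G Complex.I) z Complex.I) := by
  have h1 : (fun w => fderiv ℝ u w 1) =ᶠ[𝓝 z] G 1 := h.mono fun w hw => hw 1
  have hI : (fun w => fderiv ℝ u w Complex.I) =ᶠ[𝓝 z] G Complex.I :=
    h.mono fun w hw => hw Complex.I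
  rw [lap, h1.fderiv_eq, hI.fderiv_eq]

theorem Complex.inner_one_mul_inner_one_add_inner_I_mul_inner_I (x y : ℂ) :
    ⟪x, 1⟫ * ⟪y, 1⟫ + ⟪x, Complex.I⟫ * ⟪y, Complex.I⟫ = ⟪x, y⟫ := by
  simp [real_inner_comm y]

theorem lap_weightedRadial {f f' f'' : ℝ → ℝ} {a z : ℂ} (k : ℤ)
    (hf : ∀ x ∈ Ico (0 : ℝ) 1, HasDerivWithinAt f (f' x) (Ico 0 1) x)
    (hf' : HasDerivWithinAt f' (f'' (‖z‖ ^ 2)) (Ico 0 1) (‖z‖ ^ 2)) (hz : ‖z‖ < 1)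
    (hza : z ≠ a) :
    lap (weightedRadial f a k) z =
      (‖z - a‖ ^ 2) ^ k * (f' (‖z‖ ^ 2) + ‖z‖ ^ 2 * f'' (‖z‖ ^ 2)) +
        k * (‖z - a‖ ^ 2) ^ (k - 1) * (k * f (‖z‖ ^ 2) + 2 * ⟪z, z - a⟫ * f' (‖z‖ ^ 2)) := by
  have hnear : ∀ᶠ w in 𝓝 z, ‖w‖ < 1 ∧ w ≠ a :=
    ((isOpen_lt continuous_norm continuous_const).eventually_mem hz).and
      (isOpen_ne.eventually_mem hza)
  rw [lap_eq_of_eventually_fderiv_eq (G := weightedRadialDirDeriv f f' a k)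
      (hnear.mono fun w hw =>
        fderiv_weightedRadial_apply k (hf _ (sq_norm_mem_Ico hw.1)) hw.1 hw.2),
    fderiv_weightedRadialDirDeriv_apply_self k (hf _ (sq_norm_mem_Ico hz)) hf' hz hza,
    fderiv_weightedRadialDirDeriv_apply_self k (hf _ (sq_norm_mem_Ico hz)) hf' hz hza]
  have hp : ‖z - a‖ ^ 2 ≠ 0 := by simpa [sub_eq_zero] using hza
  have hpow : (‖z - a‖ ^ 2) ^ (k - 2) * ‖z - a‖ ^ 2 = (‖z - a‖ ^ 2) ^ (k - 1) := by
    rw [show k - 2 = k - 1 - 1 by ring, zpow_sub_one₀ hp, inv_mul_cancel_right₀ hp]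
  have hzz := Complex.inner_one_mul_inner_one_add_inner_I_mul_inner_I z z
  have hmix := Complex.inner_one_mul_inner_one_add_inner_I_mul_inner_I z (z - a)
  have haa := Complex.inner_one_mul_inner_one_add_inner_I_mul_inner_I (z - a) (z - a)
  rw [real_inner_self_eq_norm_sq] at hzz haa
  simp only [norm_one, Complex.norm_I]
  linear_combination f'' (‖z‖ ^ 2) * (‖z - a‖ ^ 2) ^ k * hzz +
    2 * k * f' (‖z‖ ^ 2) * (‖z - a‖ ^ 2) ^ (k - 1) * hmix +
    k * (k - 1) * f (‖z‖ ^ 2) * (‖z - a‖ ^ 2) ^ (k - 2) * haa +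
    k * (k - 1) * f (‖z‖ ^ 2) * hpow

theorem lap_weightedRadial_one_neg {f f' f'' : ℝ → ℝ} {z : ℂ} (β : ℕ)
    (hf : ∀ x ∈ Ico (0 : ℝ) 1, HasDerivWithinAt f (f' x) (Ico 0 1) x)
    (hf' : HasDerivWithinAt f' (f'' (‖z‖ ^ 2)) (Ico 0 1) (‖z‖ ^ 2)) (hz : ‖z‖ < 1) :
    lap (weightedRadial f 1 (-β)) z =
      ((1 - β) * f' (‖z‖ ^ 2) + ‖z‖ ^ 2 * f'' (‖z‖ ^ 2)) / ‖1 - z‖ ^ (2 * β) +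
        β * (β * f (‖z‖ ^ 2) + (1 - ‖z‖ ^ 2) * f' (‖z‖ ^ 2)) / ‖1 - z‖ ^ (2 * (β + 1)) := by
  have hz1 : z ≠ 1 := by rintro rfl; simp at hz
  have hP : ‖z - 1‖ ^ 2 ≠ 0 := by simpa [sub_eq_zero] using hz1
  have hinner : 2 * ⟪z, z - 1⟫ = ‖z‖ ^ 2 - 1 + ‖z - 1‖ ^ 2 := by
    rw [norm_sub_sq_real, inner_sub_right, real_inner_self_eq_norm_sq, norm_one]
    ring
  have hzpow : (‖z - 1‖ ^ 2) ^ (-(β : ℤ)) = ((‖z - 1‖ ^ 2) ^ β)⁻¹ := by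
    rw [zpow_neg, zpow_natCast]
  have hzpow_sub_one :
      (‖z - 1‖ ^ 2) ^ (-(β : ℤ) - 1) = ((‖z - 1‖ ^ 2) ^ β)⁻¹ * (‖z - 1‖ ^ 2)⁻¹ := by
    rw [zpow_sub_one₀ hP, hzpow]
  rw [lap_weightedRadial _ hf hf' hz hz1, norm_sub_rev 1 z, pow_mul, pow_mul,
    pow_succ (‖z - 1‖ ^ 2) β, hzpow, hzpow_sub_one, div_eq_mul_inv, div_eq_mul_inv, mul_inv]
  push_cast
  linear_combination (-β * f' (‖z‖ ^ 2) * ((‖z - 1‖ ^ 2) ^ β)⁻¹ * (‖z - 1‖ ^ 2)⁻¹) * hinner -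
    β * f' (‖z‖ ^ 2) * ((‖z - 1‖ ^ 2) ^ β)⁻¹ * mul_inv_cancel₀ hP

theorem stmt7_general (β : ℕ) (f : ℝ → ℝ)
    (hf : ContDiffOn ℝ 2 f (Set.Ico 0 1)) (z : ℂ) (hz : ‖z‖ < 1) :
    lap (fun w => f (‖w‖ ^ 2) / ‖1 - w‖ ^ (2 * β)) z =
      Pop β f (‖z‖ ^ 2) / ‖1 - z‖ ^ (2 * β) +
        Qop β f (‖z‖ ^ 2) / ‖1 - z‖ ^ (2 * (β + 1)) := by
  simp only [Pop, Qop]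
  set f' := derivWithin f (Ico 0 1)
  have hf' : ∀ x ∈ Ico (0 : ℝ) 1, HasDerivWithinAt f (f' x) (Ico 0 1) x := fun x hx =>
    (hf.differentiableOn two_ne_zero x hx).hasDerivWithinAt
  have hf'' : HasDerivWithinAt f' (derivWithin f' (Ico 0 1) (‖z‖ ^ 2)) (Ico 0 1) (‖z‖ ^ 2) :=
    ((hf.derivWithin (uniqueDiffOn_Ico 0 1) (by norm_num)).differentiableOn one_ne_zero _
      (sq_norm_mem_Ico hz)).hasDerivWithinAt
  have hu : (fun w : ℂ => f (‖w‖ ^ 2) / ‖1 - w‖ ^ (2 * β)) = weightedRadial f 1 (-β) := by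
    ext w
    simp [weightedRadial, norm_sub_rev, pow_mul, div_eq_mul_inv]
  rw [hu, lap_weightedRadial_one_neg β hf' hf'' hz]

theorem stmt7 (β : ℕ) (hβ : 1 ≤ β) (f : ℝ → ℝ)
    (hf : ContDiffOn ℝ 2 f (Set.Ico 0 1)) (z : ℂ) (hz : ‖z‖ < 1) :
    lap (fun w => f (‖w‖ ^ 2) / ‖1 - w‖ ^ (2 * β)) z =
      Pop β f (‖z‖ ^ 2) / ‖1 - z‖ ^ (2 * β) +
        Qop β f (‖z‖ ^ 2) / ‖1 - z‖ ^ (2 * (β + 1)) :=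
  stmt7_general β f hf z hz
end

section
/- Let W : [0,1) → ℝ be infinitely differentiable with W(x) > 0 for all x ∈ [0,1), let N ≥ 1 be an integer, let f₁, …, f_N : [0,1) → ℝ be infinitely differentiable, and set f_β = 0 for β > N. Assume: (i) P₁(W⁻¹ · P₁ f₁) = 0 on [0,1); (ii) P₂(W⁻¹ · Q₁ f₁) + Q₁(W⁻¹ · P₁ f₁) + P₂(W⁻¹ · P₂ f₂) = 0 on [0,1); and (iii) for every integer β ≥ 1, Q_{β+1}(W⁻¹ · Q_β f_β) + P_{β+2}(W⁻¹ · Q_{β+1} f_{β+1}) + Q_{β+1}(W⁻¹ · P_{β+1} f_{β+1}) + P_{β+2}(W⁻¹ · P_{β+2} f_{β+2}) = 0 on [0,1). Then the function u(z) = Σ_{β=1}^{N} f_β(|z|²)/|1−z|^{2β} satisfies Δ( W(|z|²)⁻¹ · Δu )(z) = 0 for every z ∈ 𝔻, i.e. u is w-biharmonic for the radial weight w(z) = W(|z|²). -/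
open Set Complex


noncomputable def Dn (z : ℂ) : ℂ →L[ℝ] ℝ :=
  (2*z.re) • Complex.reCLM + (2*z.im) • Complex.imCLM

noncomputable def Dm (z : ℂ) : ℂ →L[ℝ] ℝ :=
  (2*(z.re-1)) • Complex.reCLM + (2*z.im) • Complex.imCLM

lemma hasFDerivAt_nn (z : ℂ) :
    HasFDerivAt (fun v : ℂ => Complex.normSq v) (Dn z) z := by
  have h : (fun v : ℂ => Complex.normSq v)
      = fun v : ℂ => Complex.reCLM v * Complex.reCLM v + Complex.imCLM v * Complex.imCLM v := by
    funext v; simp [Complex.normSq_apply]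
  rw [h]
  have := ((Complex.reCLM.hasFDerivAt (x := z)).mul (Complex.reCLM.hasFDerivAt)).add
    ((Complex.imCLM.hasFDerivAt (x := z)).mul (Complex.imCLM.hasFDerivAt))
  refine this.congr_fderiv ?_
  ext w
  simp [Dn]
  ring

lemma hasFDerivAt_mm (z : ℂ) :
    HasFDerivAt (fun v : ℂ => Complex.normSq (1 - v)) (Dm z) z := by
  have h : (fun v : ℂ => Complex.normSq (1 - v))
      = fun v : ℂ => (1 - Complex.reCLM v) * (1 - Complex.reCLM v)
          + Complex.imCLM v * Complex.imCLM v := by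
    funext v; simp [Complex.normSq_apply]
  rw [h]
  have hre : HasFDerivAt (fun v : ℂ => 1 - Complex.reCLM v) (-Complex.reCLM) z := by
    have := (hasFDerivAt_const (1:ℝ) z).sub (Complex.reCLM.hasFDerivAt (x := z))
    rw [zero_sub] at this
    exact this
  have := (hre.mul hre).add
    ((Complex.imCLM.hasFDerivAt (x := z)).mul (Complex.imCLM.hasFDerivAt))
  refine this.congr_fderiv ?_
  ext w
  simp [Dm]
  ring

lemma mem_Ico_of_ball {z : ℂ} (hz : z ∈ Metric.ball (0:ℂ) 1) :
    Complex.normSq z ∈ Set.Ico (0:ℝ) 1 := by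
  refine ⟨Complex.normSq_nonneg z, ?_⟩
  rw [Complex.normSq_eq_norm_sq]
  have h : ‖z‖ < 1 := by simpa [Complex.dist_eq] using hz
  exact pow_lt_one₀ (norm_nonneg z) h two_ne_zero

lemma hasFDerivAt_comp_nn {b : ℝ → ℝ} (hb : ContDiffOn ℝ (⊤ : ℕ∞) b (Set.Ico 0 1)) {z : ℂ}
    (hz : z ∈ Metric.ball (0:ℂ) 1) :
    HasFDerivAt (fun v : ℂ => b (Complex.normSq v))
      (derivWithin b (Set.Ico 0 1) (Complex.normSq z) • Dn z) z := by
  have hmem := mem_Ico_of_ball hz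
  have hd : HasDerivWithinAt b (derivWithin b (Set.Ico 0 1) (Complex.normSq z))
      (Set.Ico 0 1) (Complex.normSq z) :=
    ((hb.differentiableOn (by simp)) _ hmem).hasDerivWithinAt
  have hmaps : Set.MapsTo (fun v : ℂ => Complex.normSq v) (Metric.ball 0 1) (Set.Ico 0 1) :=
    fun v hv => mem_Ico_of_ball hv
  have h := hd.comp_hasFDerivWithinAt z ((hasFDerivAt_nn z).hasFDerivWithinAt) hmaps
  exact h.hasFDerivAt (Metric.isOpen_ball.mem_nhds hz)

lemma mm_ne {z : ℂ} (hz : z ∈ Metric.ball (0:ℂ) 1) : Complex.normSq (1 - z) ≠ 0 := by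
  intro h
  rw [Complex.normSq_eq_zero, sub_eq_zero] at h
  have : ‖z‖ < 1 := by simpa [Complex.dist_eq] using hz
  rw [← h] at this
  simp at this

lemma master {b : ℝ → ℝ} (hb : ContDiffOn ℝ (⊤ : ℕ∞) b (Set.Ico 0 1)) {k : ℕ} (hk : 1 ≤ k)
    (c₀ c₁ c₂ : ℝ) {z : ℂ} (hz : z ∈ Metric.ball (0:ℂ) 1) :
    ∃ L : ℂ →L[ℝ] ℝ,
      HasFDerivAt
        (fun v : ℂ => (c₀ + c₁*v.re + c₂*v.im) * b (Complex.normSq v)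
            / Complex.normSq (1-v) ^ k) L z ∧
      L 1 = (c₁ * b (Complex.normSq z)
              + (c₀ + c₁*z.re + c₂*z.im) * derivWithin b (Set.Ico 0 1) (Complex.normSq z)
                * (2*z.re)) / Complex.normSq (1-z) ^ k
            - (c₀ + c₁*z.re + c₂*z.im) * b (Complex.normSq z) * ((k:ℝ)*(2*(z.re-1)))
              / Complex.normSq (1-z) ^ (k+1) ∧
      L Complex.I = (c₂ * b (Complex.normSq z)
              + (c₀ + c₁*z.re + c₂*z.im) * derivWithin b (Set.Ico 0 1) (Complex.normSq z)
                * (2*z.im)) / Complex.normSq (1-z) ^ k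
            - (c₀ + c₁*z.re + c₂*z.im) * b (Complex.normSq z) * ((k:ℝ)*(2*z.im))
              / Complex.normSq (1-z) ^ (k+1) := by
  obtain ⟨j, rfl⟩ : ∃ j, k = j + 1 := ⟨k-1, (Nat.succ_pred_eq_of_pos hk).symm⟩
  have hm := mm_ne hz
  have hp : HasFDerivAt (fun v : ℂ => c₀ + c₁*v.re + c₂*v.im)
      ((c₁ • Complex.reCLM + c₂ • Complex.imCLM : ℂ →L[ℝ] ℝ)) z := by
    have h1 := (Complex.reCLM.hasFDerivAt (x := z)).const_mul c₁
    have h2 := (Complex.imCLM.hasFDerivAt (x := z)).const_mul c₂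
    have := ((hasFDerivAt_const c₀ z).add h1).add h2
    refine this.congr_fderiv ?_
    ext w
    simp
  have hbn := hasFDerivAt_comp_nn hb hz
  have hpow : HasFDerivAt (fun v : ℂ => Complex.normSq (1-v) ^ (j+1))
      ((((j+1:ℕ):ℝ) * Complex.normSq (1-z) ^ j) • Dm z) z := by
    have h0 := hasDerivAt_pow (j+1) (Complex.normSq (1-z))
    have := h0.comp_hasFDerivAt z (hasFDerivAt_mm z)
    exact this
  have hMne : Complex.normSq (1-z) ^ (j+1) ≠ 0 := pow_ne_zero _ hm
  have hinv : HasFDerivAt (fun v : ℂ => (Complex.normSq (1-v) ^ (j+1))⁻¹)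
      ((-((Complex.normSq (1-z) ^ (j+1))^2)⁻¹) •
        ((((j+1:ℕ):ℝ) * Complex.normSq (1-z) ^ j) • Dm z)) z := by
    have h0 := hasDerivAt_inv hMne
    have := h0.comp_hasFDerivAt z hpow
    exact this
  have hF := (hp.mul hbn).mul hinv
  have hfun : (fun v : ℂ => (c₀ + c₁*v.re + c₂*v.im) * b (Complex.normSq v)
      / Complex.normSq (1-v) ^ (j+1))
      = fun v : ℂ => ((c₀ + c₁*v.re + c₂*v.im) * b (Complex.normSq v))
          * (Complex.normSq (1-v) ^ (j+1))⁻¹ := by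
    funext v; rw [div_eq_mul_inv]
  rw [hfun]
  refine ⟨_, hF, ?_, ?_⟩
  · simp only [ContinuousLinearMap.add_apply, ContinuousLinearMap.smul_apply, Dn, Dm,
      Complex.reCLM_apply, Complex.imCLM_apply, Complex.one_re, Complex.one_im,
      smul_eq_mul, Pi.mul_apply]
    push_cast
    field_simp
    ring
  · simp only [ContinuousLinearMap.add_apply, ContinuousLinearMap.smul_apply, Dn, Dm,
      Complex.reCLM_apply, Complex.imCLM_apply, Complex.I_re, Complex.I_im,
      smul_eq_mul, Pi.mul_apply]
    push_cast
    field_simp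
    ring

lemma single {b : ℝ → ℝ} (hb : ContDiffOn ℝ (⊤ : ℕ∞) b (Set.Ico 0 1)) {k : ℕ} (hk : 1 ≤ k)
    {z : ℂ} (hz : z ∈ Metric.ball (0:ℂ) 1) :
    ∃ L : ℂ →L[ℝ] ℝ,
      HasFDerivAt (fun v : ℂ => b (Complex.normSq v) / Complex.normSq (1-v) ^ k) L z ∧
      L 1 = (0 + 2*z.re + 0*z.im) * derivWithin b (Set.Ico 0 1) (Complex.normSq z)
              / Complex.normSq (1-z) ^ k
          + ((2*(k:ℝ)) + (-(2*(k:ℝ)))*z.re + 0*z.im) * b (Complex.normSq z)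
              / Complex.normSq (1-z) ^ (k+1) ∧
      L Complex.I = (0 + 0*z.re + 2*z.im) * derivWithin b (Set.Ico 0 1) (Complex.normSq z)
              / Complex.normSq (1-z) ^ k
          + (0 + 0*z.re + (-(2*(k:ℝ)))*z.im) * b (Complex.normSq z)
              / Complex.normSq (1-z) ^ (k+1) := by
  obtain ⟨L, hL, h1, hI⟩ := master hb hk 1 0 0 hz
  have hm := mm_ne hz
  have hfun : (fun v : ℂ => ((1:ℝ) + 0*v.re + 0*v.im) * b (Complex.normSq v)
      / Complex.normSq (1-v) ^ k) = fun v : ℂ => b (Complex.normSq v) / Complex.normSq (1-v) ^ k := by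
    funext v; norm_num
  rw [hfun] at hL
  refine ⟨L, hL, ?_, ?_⟩
  · rw [h1]; field_simp; ring
  · rw [hI]; field_simp; ring

lemma lap_sum (S : Finset ℕ) (a : ℕ → ℝ → ℝ) (hS : ∀ γ ∈ S, 1 ≤ γ)
    (ha : ∀ γ ∈ S, ContDiffOn ℝ (⊤ : ℕ∞) (a γ) (Set.Ico 0 1))
    {z : ℂ} (hz : z ∈ Metric.ball (0:ℂ) 1) :
    lap (fun v => ∑ γ ∈ S, a γ (Complex.normSq v) / Complex.normSq (1-v) ^ γ) z
      = ∑ γ ∈ S, (Pop γ (a γ) (Complex.normSq z) / Complex.normSq (1-z) ^ γ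
          + Qop γ (a γ) (Complex.normSq z) / Complex.normSq (1-z) ^ (γ+1)) := by
  have ha1 : ∀ γ ∈ S, ContDiffOn ℝ (⊤ : ℕ∞) (derivWithin (a γ) (Set.Ico 0 1)) (Set.Ico 0 1) :=
    fun γ hγ => (ha γ hγ).derivWithin (uniqueDiffOn_Ico 0 1) (by simp)
  set u : ℂ → ℝ := fun v => ∑ γ ∈ S, a γ (Complex.normSq v) / Complex.normSq (1-v) ^ γ with hu
  -- first level, direction 1
  have h1 : ∀ w ∈ Metric.ball (0:ℂ) 1, fderiv ℝ u w 1
      = ∑ γ ∈ S, ((0 + 2*w.re + 0*w.im) * derivWithin (a γ) (Set.Ico 0 1) (Complex.normSq w)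
            / Complex.normSq (1-w) ^ γ
        + ((2*(γ:ℝ)) + (-(2*(γ:ℝ)))*w.re + 0*w.im) * a γ (Complex.normSq w)
            / Complex.normSq (1-w) ^ (γ+1)) := by
    intro w hw
    have hdiff : ∀ γ ∈ S, DifferentiableAt ℝ
        (fun v : ℂ => a γ (Complex.normSq v) / Complex.normSq (1-v) ^ γ) w := by
      intro γ hγ
      obtain ⟨L, hL, -, -⟩ := single (ha γ hγ) (hS γ hγ) hw
      exact hL.differentiableAt
    rw [hu, fderiv_fun_sum hdiff, ContinuousLinearMap.sum_apply]
    refine Finset.sum_congr rfl fun γ hγ => ?_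
    obtain ⟨L, hL, h1v, -⟩ := single (ha γ hγ) (hS γ hγ) hw
    rw [hL.fderiv, h1v]
  have hI : ∀ w ∈ Metric.ball (0:ℂ) 1, fderiv ℝ u w Complex.I
      = ∑ γ ∈ S, ((0 + 0*w.re + 2*w.im) * derivWithin (a γ) (Set.Ico 0 1) (Complex.normSq w)
            / Complex.normSq (1-w) ^ γ
        + (0 + 0*w.re + (-(2*(γ:ℝ)))*w.im) * a γ (Complex.normSq w)
            / Complex.normSq (1-w) ^ (γ+1)) := by
    intro w hw
    have hdiff : ∀ γ ∈ S, DifferentiableAt ℝ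
        (fun v : ℂ => a γ (Complex.normSq v) / Complex.normSq (1-v) ^ γ) w := by
      intro γ hγ
      obtain ⟨L, hL, -, -⟩ := single (ha γ hγ) (hS γ hγ) hw
      exact hL.differentiableAt
    rw [hu, fderiv_fun_sum hdiff, ContinuousLinearMap.sum_apply]
    refine Finset.sum_congr rfl fun γ hγ => ?_
    obtain ⟨L, hL, -, hIv⟩ := single (ha γ hγ) (hS γ hγ) hw
    rw [hL.fderiv, hIv]
  -- second level reductions
  have hev1 : (fun w => fderiv ℝ u w 1) =ᶠ[nhds z]
      (fun w => ∑ γ ∈ S, ((0 + 2*w.re + 0*w.im) * derivWithin (a γ) (Set.Ico 0 1) (Complex.normSq w)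
            / Complex.normSq (1-w) ^ γ
        + ((2*(γ:ℝ)) + (-(2*(γ:ℝ)))*w.re + 0*w.im) * a γ (Complex.normSq w)
            / Complex.normSq (1-w) ^ (γ+1))) :=
    Filter.eventuallyEq_of_mem (Metric.isOpen_ball.mem_nhds hz) h1
  have hevI : (fun w => fderiv ℝ u w Complex.I) =ᶠ[nhds z]
      (fun w => ∑ γ ∈ S, ((0 + 0*w.re + 2*w.im) * derivWithin (a γ) (Set.Ico 0 1) (Complex.normSq w)
            / Complex.normSq (1-w) ^ γ
        + (0 + 0*w.re + (-(2*(γ:ℝ)))*w.im) * a γ (Complex.normSq w)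
            / Complex.normSq (1-w) ^ (γ+1))) :=
    Filter.eventuallyEq_of_mem (Metric.isOpen_ball.mem_nhds hz) hI
  rw [lap, hev1.fderiv_eq, hevI.fderiv_eq]
  -- second derivatives
  have key1 : ∀ γ ∈ S, ∃ LA LB : ℂ →L[ℝ] ℝ,
      HasFDerivAt (fun w : ℂ => (0 + 2*w.re + 0*w.im)
          * derivWithin (a γ) (Set.Ico 0 1) (Complex.normSq w) / Complex.normSq (1-w) ^ γ) LA z ∧
      HasFDerivAt (fun w : ℂ => ((2*(γ:ℝ)) + (-(2*(γ:ℝ)))*w.re + 0*w.im)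
          * a γ (Complex.normSq w) / Complex.normSq (1-w) ^ (γ+1)) LB z ∧
      LA 1 + LB 1
        = ((2 * derivWithin (a γ) (Set.Ico 0 1) (Complex.normSq z)
            + (0 + 2*z.re + 0*z.im) * derivWithin (derivWithin (a γ) (Set.Ico 0 1)) (Set.Ico 0 1) (Complex.normSq z)
              * (2*z.re)) / Complex.normSq (1-z) ^ γ
          - (0 + 2*z.re + 0*z.im) * derivWithin (a γ) (Set.Ico 0 1) (Complex.normSq z) * ((γ:ℝ)*(2*(z.re-1)))
            / Complex.normSq (1-z) ^ (γ+1))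
        + (((-(2*(γ:ℝ))) * a γ (Complex.normSq z)
            + ((2*(γ:ℝ)) + (-(2*(γ:ℝ)))*z.re + 0*z.im) * derivWithin (a γ) (Set.Ico 0 1) (Complex.normSq z)
              * (2*z.re)) / Complex.normSq (1-z) ^ (γ+1)
          - ((2*(γ:ℝ)) + (-(2*(γ:ℝ)))*z.re + 0*z.im) * a γ (Complex.normSq z) * (((γ+1:ℕ):ℝ)*(2*(z.re-1)))
            / Complex.normSq (1-z) ^ (γ+1+1)) := by
    intro γ hγ
    obtain ⟨LA, hLA, h1A, -⟩ := master (ha1 γ hγ) (hS γ hγ) 0 2 0 hz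
    obtain ⟨LB, hLB, h1B, -⟩ := master (ha γ hγ) (Nat.le_add_left 1 γ) (2*(γ:ℝ)) (-(2*(γ:ℝ))) 0 hz
    exact ⟨LA, LB, hLA, hLB, by rw [h1A, h1B]⟩
  
  have keyI : ∀ γ ∈ S, ∃ LA LB : ℂ →L[ℝ] ℝ,
      HasFDerivAt (fun w : ℂ => (0 + 0*w.re + 2*w.im)
          * derivWithin (a γ) (Set.Ico 0 1) (Complex.normSq w) / Complex.normSq (1-w) ^ γ) LA z ∧
      HasFDerivAt (fun w : ℂ => (0 + 0*w.re + (-(2*(γ:ℝ)))*w.im)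
          * a γ (Complex.normSq w) / Complex.normSq (1-w) ^ (γ+1)) LB z ∧
      LA Complex.I + LB Complex.I
        = ((2 * derivWithin (a γ) (Set.Ico 0 1) (Complex.normSq z)
            + (0 + 0*z.re + 2*z.im) * derivWithin (derivWithin (a γ) (Set.Ico 0 1)) (Set.Ico 0 1) (Complex.normSq z)
              * (2*z.im)) / Complex.normSq (1-z) ^ γ
          - (0 + 0*z.re + 2*z.im) * derivWithin (a γ) (Set.Ico 0 1) (Complex.normSq z) * ((γ:ℝ)*(2*z.im))
            / Complex.normSq (1-z) ^ (γ+1))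
        + (((-(2*(γ:ℝ))) * a γ (Complex.normSq z)
            + (0 + 0*z.re + (-(2*(γ:ℝ)))*z.im) * derivWithin (a γ) (Set.Ico 0 1) (Complex.normSq z)
              * (2*z.im)) / Complex.normSq (1-z) ^ (γ+1)
          - (0 + 0*z.re + (-(2*(γ:ℝ)))*z.im) * a γ (Complex.normSq z) * (((γ+1:ℕ):ℝ)*(2*z.im))
            / Complex.normSq (1-z) ^ (γ+1+1)) := by
    intro γ hγ
    obtain ⟨LA, hLA, -, hIA⟩ := master (ha1 γ hγ) (hS γ hγ) 0 0 2 hz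
    obtain ⟨LB, hLB, -, hIB⟩ := master (ha γ hγ) (Nat.le_add_left 1 γ) 0 0 (-(2*(γ:ℝ))) hz
    exact ⟨LA, LB, hLA, hLB, by rw [hIA, hIB]⟩
  have e1 : fderiv ℝ
      (fun w => ∑ γ ∈ S, ((0 + 2*w.re + 0*w.im) * derivWithin (a γ) (Set.Ico 0 1) (Complex.normSq w)
            / Complex.normSq (1-w) ^ γ
        + ((2*(γ:ℝ)) + (-(2*(γ:ℝ)))*w.re + 0*w.im) * a γ (Complex.normSq w)
            / Complex.normSq (1-w) ^ (γ+1))) z 1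
      = ∑ γ ∈ S,
        (((2 * derivWithin (a γ) (Set.Ico 0 1) (Complex.normSq z)
            + (0 + 2*z.re + 0*z.im) * derivWithin (derivWithin (a γ) (Set.Ico 0 1)) (Set.Ico 0 1) (Complex.normSq z)
              * (2*z.re)) / Complex.normSq (1-z) ^ γ
          - (0 + 2*z.re + 0*z.im) * derivWithin (a γ) (Set.Ico 0 1) (Complex.normSq z) * ((γ:ℝ)*(2*(z.re-1)))
            / Complex.normSq (1-z) ^ (γ+1))
        + (((-(2*(γ:ℝ))) * a γ (Complex.normSq z)
            + ((2*(γ:ℝ)) + (-(2*(γ:ℝ)))*z.re + 0*z.im) * derivWithin (a γ) (Set.Ico 0 1) (Complex.normSq z)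
              * (2*z.re)) / Complex.normSq (1-z) ^ (γ+1)
          - ((2*(γ:ℝ)) + (-(2*(γ:ℝ)))*z.re + 0*z.im) * a γ (Complex.normSq z) * (((γ+1:ℕ):ℝ)*(2*(z.re-1)))
            / Complex.normSq (1-z) ^ (γ+1+1))) := by
    choose LA LB hLA hLB hval using key1
    have hdiff : ∀ γ ∈ S, DifferentiableAt ℝ
        (fun w : ℂ => (0 + 2*w.re + 0*w.im) * derivWithin (a γ) (Set.Ico 0 1) (Complex.normSq w)
            / Complex.normSq (1-w) ^ γ
          + ((2*(γ:ℝ)) + (-(2*(γ:ℝ)))*w.re + 0*w.im) * a γ (Complex.normSq w)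
            / Complex.normSq (1-w) ^ (γ+1)) z :=
      fun γ hγ => ((hLA γ hγ).add (hLB γ hγ)).differentiableAt
    rw [fderiv_fun_sum hdiff, ContinuousLinearMap.sum_apply]
    refine Finset.sum_congr rfl fun γ hγ => ?_
    rw [((hLA γ hγ).fun_add (hLB γ hγ)).fderiv, ContinuousLinearMap.add_apply, hval γ hγ]
  have eI : fderiv ℝ
      (fun w => ∑ γ ∈ S, ((0 + 0*w.re + 2*w.im) * derivWithin (a γ) (Set.Ico 0 1) (Complex.normSq w)
            / Complex.normSq (1-w) ^ γ
        + (0 + 0*w.re + (-(2*(γ:ℝ)))*w.im) * a γ (Complex.normSq w)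
            / Complex.normSq (1-w) ^ (γ+1))) z Complex.I
      = ∑ γ ∈ S,
        (((2 * derivWithin (a γ) (Set.Ico 0 1) (Complex.normSq z)
            + (0 + 0*z.re + 2*z.im) * derivWithin (derivWithin (a γ) (Set.Ico 0 1)) (Set.Ico 0 1) (Complex.normSq z)
              * (2*z.im)) / Complex.normSq (1-z) ^ γ
          - (0 + 0*z.re + 2*z.im) * derivWithin (a γ) (Set.Ico 0 1) (Complex.normSq z) * ((γ:ℝ)*(2*z.im))
            / Complex.normSq (1-z) ^ (γ+1))
        + (((-(2*(γ:ℝ))) * a γ (Complex.normSq z)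
            + (0 + 0*z.re + (-(2*(γ:ℝ)))*z.im) * derivWithin (a γ) (Set.Ico 0 1) (Complex.normSq z)
              * (2*z.im)) / Complex.normSq (1-z) ^ (γ+1)
          - (0 + 0*z.re + (-(2*(γ:ℝ)))*z.im) * a γ (Complex.normSq z) * (((γ+1:ℕ):ℝ)*(2*z.im))
            / Complex.normSq (1-z) ^ (γ+1+1))) := by
    choose LA LB hLA hLB hval using keyI
    have hdiff : ∀ γ ∈ S, DifferentiableAt ℝ
        (fun w : ℂ => (0 + 0*w.re + 2*w.im) * derivWithin (a γ) (Set.Ico 0 1) (Complex.normSq w)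
            / Complex.normSq (1-w) ^ γ
          + (0 + 0*w.re + (-(2*(γ:ℝ)))*w.im) * a γ (Complex.normSq w)
            / Complex.normSq (1-w) ^ (γ+1)) z :=
      fun γ hγ => ((hLA γ hγ).add (hLB γ hγ)).differentiableAt
    rw [fderiv_fun_sum hdiff, ContinuousLinearMap.sum_apply]
    refine Finset.sum_congr rfl fun γ hγ => ?_
    rw [((hLA γ hγ).fun_add (hLB γ hγ)).fderiv, ContinuousLinearMap.add_apply, hval γ hγ]
  rw [e1, eI, ← Finset.sum_add_distrib, Finset.mul_sum]
  refine Finset.sum_congr rfl fun γ hγ => ?_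
  obtain ⟨j, rfl⟩ : ∃ j, γ = j + 1 := ⟨γ-1, (Nat.succ_pred_eq_of_pos (hS γ hγ)).symm⟩
  have hm : Complex.normSq (1 - z) ≠ 0 := mm_ne hz
  have ht : Complex.normSq z = z.re^2 + z.im^2 := by rw [Complex.normSq_apply]; ring
  have hm2 : Complex.normSq (1 - z) = (1 - z.re)^2 + z.im^2 := by
    rw [Complex.normSq_apply]; simp; ring
  simp only [Pop, Qop]
  rw [hm2] at hm
  rw [ht, hm2]
  push_cast
  field_simp
  ring

lemma reindex (M : ℕ) (P Q : ℕ → ℝ) (r : ℝ) (hP : P (M+1) = 0) (hQ : Q 0 = 0) :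
    ∑ β ∈ Finset.Icc 1 M, (P β / r^β + Q β / r^(β+1))
      = ∑ γ ∈ Finset.Icc 1 (M+1), (P γ + Q (γ-1)) / r^γ := by
  rw [Finset.sum_add_distrib]
  have h1 : ∑ β ∈ Finset.Icc 1 M, P β / r^β = ∑ γ ∈ Finset.Icc 1 (M+1), P γ / r^γ := by
    have hu : Finset.Icc 1 (M+1) = Finset.Icc 1 M ∪ {M+1} := by ext i; simp; omega
    have hd : Disjoint (Finset.Icc 1 M) ({M+1} : Finset ℕ) := by simp
    rw [hu, Finset.sum_union hd, Finset.sum_singleton, hP]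
    simp
  have h2 : ∑ β ∈ Finset.Icc 1 M, Q β / r^(β+1)
      = ∑ γ ∈ Finset.Icc 1 (M+1), Q (γ-1) / r^γ := by
    have hmap : Finset.Icc 2 (M+1) = (Finset.Icc 1 M).map (addRightEmbedding 1) := by
      rw [Finset.map_add_right_Icc]
    have hs : ∑ γ ∈ Finset.Icc 2 (M+1), Q (γ-1)/r^γ
        = ∑ β ∈ Finset.Icc 1 M, Q β / r^(β+1) := by
      rw [hmap, Finset.sum_map]
      refine Finset.sum_congr rfl fun β _ => ?_
      simp [addRightEmbedding]
    have hsplit : ∑ γ ∈ Finset.Icc 1 (M+1), Q (γ-1)/r^γ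
        = Q 0 / r^1 + ∑ γ ∈ Finset.Icc 2 (M+1), Q (γ-1)/r^γ := by
      have h2' : Finset.Icc 2 (M+1) = Finset.Ioc 1 (M+1) := Finset.Icc_add_one_left_eq_Ioc 1 (M+1)
      rw [h2', ← Finset.Ioc_insert_left (by omega : 1 ≤ M+1), Finset.sum_insert (by simp)]
    rw [hsplit, hQ, hs]
    simp
  rw [h1, h2, ← Finset.sum_add_distrib]
  exact Finset.sum_congr rfl fun γ _ => (add_div _ _ _).symm

lemma Pop_congr {g h : ℝ → ℝ} (he : Set.EqOn g h (Set.Ico 0 1)) {k : ℕ} {t : ℝ}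
    (ht : t ∈ Set.Ico (0:ℝ) 1) : Pop k g t = Pop k h t := by
  have hd : Set.EqOn (fun y => derivWithin g (Set.Ico 0 1) y)
      (fun y => derivWithin h (Set.Ico 0 1) y) (Set.Ico 0 1) :=
    fun y hy => derivWithin_congr he (he hy)
  simp only [Pop]
  rw [derivWithin_congr he (he ht), derivWithin_congr hd (hd ht)]

lemma Qop_congr {g h : ℝ → ℝ} (he : Set.EqOn g h (Set.Ico 0 1)) {k : ℕ} {t : ℝ}
    (ht : t ∈ Set.Ico (0:ℝ) 1) : Qop k g t = Qop k h t := by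
  simp only [Qop]
  rw [derivWithin_congr he (he ht), he ht]

lemma Pop_zero {k : ℕ} {t : ℝ} (ht : t ∈ Set.Ico (0:ℝ) 1) :
    Pop k (fun _ => (0:ℝ)) t = 0 := by
  have h0 : ∀ y ∈ Set.Ico (0:ℝ) 1, derivWithin (fun _ => (0:ℝ)) (Set.Ico 0 1) y = 0 :=
    fun y hy => by simp
  simp only [Pop]
  rw [h0 t ht, derivWithin_congr (fun y hy => h0 y hy) (h0 t ht),
    derivWithin_fun_const, Pi.zero_apply]
  ring

lemma Qop_zero {k : ℕ} {t : ℝ} (ht : t ∈ Set.Ico (0:ℝ) 1) :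
    Qop k (fun _ => (0:ℝ)) t = 0 := by
  simp only [Qop]
  rw [derivWithin_fun_const, Pi.zero_apply]
  ring

lemma Pop_add {g h : ℝ → ℝ} (hg : ContDiffOn ℝ (⊤ : ℕ∞) g (Set.Ico 0 1))
    (hh : ContDiffOn ℝ (⊤ : ℕ∞) h (Set.Ico 0 1)) {k : ℕ} {t : ℝ}
    (ht : t ∈ Set.Ico (0:ℝ) 1) :
    Pop k (fun y => g y + h y) t = Pop k g t + Pop k h t := by
  have hud := uniqueDiffOn_Ico (0:ℝ) 1
  have hdg := hg.differentiableOn (by simp)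
  have hdh := hh.differentiableOn (by simp)
  have h1 : ∀ y ∈ Set.Ico (0:ℝ) 1, derivWithin (fun x => g x + h x) (Set.Ico 0 1) y
      = derivWithin g (Set.Ico 0 1) y + derivWithin h (Set.Ico 0 1) y :=
    fun y hy => derivWithin_add (hdg y hy) (hdh y hy)
  have hg1 : DifferentiableOn ℝ (derivWithin g (Set.Ico 0 1)) (Set.Ico 0 1) :=
    (hg.derivWithin hud (by exact_mod_cast le_top)).differentiableOn (by simp : ((⊤ : ℕ∞) : WithTop ℕ∞) ≠ 0)
  have hh1 : DifferentiableOn ℝ (derivWithin h (Set.Ico 0 1)) (Set.Ico 0 1) :=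
    (hh.derivWithin hud (by exact_mod_cast le_top)).differentiableOn (by simp : ((⊤ : ℕ∞) : WithTop ℕ∞) ≠ 0)
  simp only [Pop]
  rw [h1 t ht]
  have h2 : derivWithin (fun y => derivWithin (fun x => g x + h x) (Set.Ico 0 1) y) (Set.Ico 0 1) t
      = derivWithin (fun y => derivWithin g (Set.Ico 0 1) y) (Set.Ico 0 1) t
        + derivWithin (fun y => derivWithin h (Set.Ico 0 1) y) (Set.Ico 0 1) t := by
    rw [derivWithin_congr (fun y hy => h1 y hy) (h1 t ht)]
    exact derivWithin_add (hg1 t ht) (hh1 t ht)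
  rw [h2]
  ring

lemma Qop_add {g h : ℝ → ℝ} (hg : ContDiffOn ℝ (⊤ : ℕ∞) g (Set.Ico 0 1))
    (hh : ContDiffOn ℝ (⊤ : ℕ∞) h (Set.Ico 0 1)) {k : ℕ} {t : ℝ}
    (ht : t ∈ Set.Ico (0:ℝ) 1) :
    Qop k (fun y => g y + h y) t = Qop k g t + Qop k h t := by
  have hud := uniqueDiffOn_Ico (0:ℝ) 1
  simp only [Qop]
  rw [derivWithin_fun_add (hg.differentiableOn (by simp) t ht)
    (hh.differentiableOn (by simp) t ht)]
  ring

lemma contDiffOn_Pop {g : ℝ → ℝ} (hg : ContDiffOn ℝ (⊤ : ℕ∞) g (Set.Ico 0 1)) (k : ℕ) :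
    ContDiffOn ℝ (⊤ : ℕ∞) (fun x => Pop k g x) (Set.Ico 0 1) := by
  have hud := uniqueDiffOn_Ico (0:ℝ) 1
  have h1 : ContDiffOn ℝ (⊤ : ℕ∞) (derivWithin g (Set.Ico 0 1)) (Set.Ico 0 1) :=
    hg.derivWithin hud (by simp)
  have h2 : ContDiffOn ℝ (⊤ : ℕ∞) (derivWithin (derivWithin g (Set.Ico 0 1)) (Set.Ico 0 1))
      (Set.Ico 0 1) := h1.derivWithin hud (by simp)
  simp only [Pop]
  exact (contDiffOn_const.mul h1).add (contDiffOn_id.mul h2)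

lemma contDiffOn_Qop {g : ℝ → ℝ} (hg : ContDiffOn ℝ (⊤ : ℕ∞) g (Set.Ico 0 1)) (k : ℕ) :
    ContDiffOn ℝ (⊤ : ℕ∞) (fun x => Qop k g x) (Set.Ico 0 1) := by
  have hud := uniqueDiffOn_Ico (0:ℝ) 1
  have h1 : ContDiffOn ℝ (⊤ : ℕ∞) (derivWithin g (Set.Ico 0 1)) (Set.Ico 0 1) :=
    hg.derivWithin hud (by simp)
  simp only [Qop]
  exact contDiffOn_const.mul ((contDiffOn_const.mul hg).add
    ((contDiffOn_const.sub contDiffOn_id).mul h1))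


lemma lap_congr {f g : ℂ → ℝ} {z : ℂ} (h : f =ᶠ[nhds z] g) : lap f z = lap g z := by
  have h' : fderiv ℝ f =ᶠ[nhds z] fderiv ℝ g := h.fderiv
  have h1 : (fun w => fderiv ℝ f w 1) =ᶠ[nhds z] fun w => fderiv ℝ g w 1 :=
    h'.mono fun w hw => by show fderiv ℝ f w 1 = fderiv ℝ g w 1; rw [hw]
  have h2 : (fun w => fderiv ℝ f w Complex.I) =ᶠ[nhds z] fun w => fderiv ℝ g w Complex.I :=
    h'.mono fun w hw => by
      show fderiv ℝ f w Complex.I = fderiv ℝ g w Complex.I; rw [hw]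
  rw [lap, lap, h1.fderiv_eq, h2.fderiv_eq]

theorem stmt8 (W : ℝ → ℝ) (hWpos : ∀ x ∈ Set.Ico (0 : ℝ) 1, 0 < W x)
    (hWsmooth : ContDiffOn ℝ (⊤ : ℕ∞) W (Set.Ico 0 1))
    (N : ℕ) (hN : 1 ≤ N) (f : ℕ → ℝ → ℝ)
    (hfsmooth : ∀ β, ContDiffOn ℝ (⊤ : ℕ∞) (f β) (Set.Ico 0 1))
    (hftail : ∀ β, N < β → f β = 0)
    (h1 : ∀ x ∈ Set.Ico (0 : ℝ) 1,
      Pop 1 (fun y => Pop 1 (f 1) y / W y) x = 0)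
    (h2 : ∀ x ∈ Set.Ico (0 : ℝ) 1,
      Pop 2 (fun y => Qop 1 (f 1) y / W y) x +
        Qop 1 (fun y => Pop 1 (f 1) y / W y) x +
        Pop 2 (fun y => Pop 2 (f 2) y / W y) x = 0)
    (h3 : ∀ β : ℕ, 1 ≤ β → ∀ x ∈ Set.Ico (0 : ℝ) 1,
      Qop (β + 1) (fun y => Qop β (f β) y / W y) x +
        Pop (β + 2) (fun y => Qop (β + 1) (f (β + 1)) y / W y) x +
        Qop (β + 1) (fun y => Pop (β + 1) (f (β + 1)) y / W y) x +
        Pop (β + 2) (fun y => Pop (β + 2) (f (β + 2)) y / W y) x = 0) :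
    ∀ z : ℂ, ‖z‖ < 1 →
      lap (fun w =>
        lap (fun v => ∑ β ∈ Finset.Icc 1 N,
              f β (‖v‖ ^ 2) / ‖1 - v‖ ^ (2 * β)) w
          / W (‖w‖ ^ 2)) z = 0 := by
  intro z hz0
  have hz : z ∈ Metric.ball (0:ℂ) 1 := by
    simpa [Metric.mem_ball, Complex.dist_eq] using hz0
  have ht := mem_Ico_of_ball hz
  have hWne : ∀ x ∈ Set.Ico (0:ℝ) 1, W x ≠ 0 := fun x hx => (hWpos x hx).ne'
  have hfun : (fun v : ℂ => ∑ β ∈ Finset.Icc 1 N,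
        f β (‖v‖ ^ 2) / ‖1 - v‖ ^ (2 * β))
      = fun v : ℂ => ∑ β ∈ Finset.Icc 1 N,
        f β (Complex.normSq v) / Complex.normSq (1 - v) ^ β := by
    funext v
    refine Finset.sum_congr rfl fun β _ => ?_
    rw [← Complex.sq_norm, ← Complex.sq_norm, ← pow_mul]
  have hinner : ∀ w ∈ Metric.ball (0:ℂ) 1,
      lap (fun v : ℂ => ∑ β ∈ Finset.Icc 1 N,
          f β (Complex.normSq v) / Complex.normSq (1 - v) ^ β) w
        = ∑ γ ∈ Finset.Icc 1 (N+1),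
            (Pop γ (f γ) (Complex.normSq w) + Qop (γ-1) (f (γ-1)) (Complex.normSq w))
              / Complex.normSq (1-w) ^ γ := by
    intro w hw
    rw [lap_sum (Finset.Icc 1 N) f (fun β hβ => (Finset.mem_Icc.mp hβ).1)
      (fun β _ => hfsmooth β) hw]
    refine reindex N (fun β => Pop β (f β) (Complex.normSq w))
      (fun β => Qop β (f β) (Complex.normSq w)) (Complex.normSq (1-w)) ?_ (by simp [Qop])
    show Pop (N+1) (f (N+1)) (Complex.normSq w) = 0
    rw [hftail (N+1) (by omega)]
    exact Pop_zero (mem_Ico_of_ball hw)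
  have hev : (fun w : ℂ => lap (fun v : ℂ => ∑ β ∈ Finset.Icc 1 N,
          f β (‖v‖ ^ 2) / ‖1 - v‖ ^ (2 * β)) w
        / W (‖w‖ ^ 2))
      =ᶠ[nhds z] fun w : ℂ => ∑ γ ∈ Finset.Icc 1 (N+1),
          (Pop γ (f γ) (Complex.normSq w) + Qop (γ-1) (f (γ-1)) (Complex.normSq w))
            / W (Complex.normSq w) / Complex.normSq (1-w) ^ γ := by
    refine Filter.eventuallyEq_of_mem (Metric.isOpen_ball.mem_nhds hz) fun w hw => ?_
    show lap _ w / W (‖w‖ ^ 2) = _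
    rw [hfun, hinner w hw, Complex.sq_norm, Finset.sum_div]
    refine Finset.sum_congr rfl fun γ _ => ?_
    rw [div_right_comm]
  rw [lap_congr hev]
  have hb : ∀ γ : ℕ, ContDiffOn ℝ (⊤ : ℕ∞)
      (fun t => (Pop γ (f γ) t + Qop (γ-1) (f (γ-1)) t) / W t) (Set.Ico 0 1) :=
    fun γ => ((contDiffOn_Pop (hfsmooth γ) γ).add
      (contDiffOn_Qop (hfsmooth (γ-1)) (γ-1))).div hWsmooth hWne
  have hls := lap_sum (Finset.Icc 1 (N+1))
      (fun γ t => (Pop γ (f γ) t + Qop (γ-1) (f (γ-1)) t) / W t)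
      (fun γ hγ => (Finset.mem_Icc.mp hγ).1) (fun γ _ => hb γ) hz
  rw [hls]
  have hre := reindex (N+1)
      (fun δ => Pop δ (fun t => (Pop δ (f δ) t + Qop (δ-1) (f (δ-1)) t) / W t)
        (Complex.normSq z))
      (fun δ => Qop δ (fun t => (Pop δ (f δ) t + Qop (δ-1) (f (δ-1)) t) / W t)
        (Complex.normSq z))
      (Complex.normSq (1-z)) ?_ (by simp [Qop])
  · rw [hre]
    refine Finset.sum_eq_zero fun δ hδ => ?_
    obtain ⟨hδ1, hδ2⟩ := Finset.mem_Icc.mp hδ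
    suffices h0 : Pop δ (fun t => (Pop δ (f δ) t + Qop (δ-1) (f (δ-1)) t) / W t)
        (Complex.normSq z)
        + Qop (δ-1) (fun t => (Pop (δ-1) (f (δ-1)) t + Qop (δ-1-1) (f (δ-1-1)) t) / W t)
          (Complex.normSq z) = 0 by
      rw [h0, zero_div]
    have hb1eq : Set.EqOn (fun t => (Pop 1 (f 1) t + Qop 0 (f 0) t) / W t)
        (fun y => Pop 1 (f 1) y / W y) (Set.Ico 0 1) := fun t' _ => by simp [Qop]
    by_cases hd1 : δ = 1
    · subst hd1
      have e0 : (1:ℕ) - 1 = 0 := rfl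
      rw [e0]
      rw [Pop_congr hb1eq ht, h1 (Complex.normSq z) ht]
      simp [Qop]
    by_cases hd2 : δ = 2
    · subst hd2
      have e0 : (2:ℕ) - 1 = 1 := rfl
      rw [e0]
      have e1 : (1:ℕ) - 1 = 0 := rfl
      rw [e1]
      have hsplit : Set.EqOn (fun t => (Pop 2 (f 2) t + Qop 1 (f 1) t) / W t)
          (fun y => Qop 1 (f 1) y / W y + Pop 2 (f 2) y / W y) (Set.Ico 0 1) :=
        fun t' _ => by beta_reduce; rw [add_div]; ring
      rw [Pop_congr hsplit ht,
        Pop_add (g := fun y => Qop 1 (f 1) y / W y) (h := fun y => Pop 2 (f 2) y / W y)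
          ((contDiffOn_Qop (hfsmooth 1) 1).div hWsmooth hWne)
          ((contDiffOn_Pop (hfsmooth 2) 2).div hWsmooth hWne) ht,
        Qop_congr hb1eq ht]
      linarith [h2 (Complex.normSq z) ht]
    obtain ⟨β, rfl⟩ : ∃ β, δ = β + 3 := ⟨δ-3, by omega⟩
    have e0 : β + 3 - 1 = β + 2 := by omega
    rw [e0]
    have e1 : β + 2 - 1 = β + 1 := by omega
    rw [e1]
    have hsplitP : Set.EqOn
        (fun t => (Pop (β+3) (f (β+3)) t + Qop (β+2) (f (β+2)) t) / W t)
        (fun y => Qop (β+2) (f (β+2)) y / W y + Pop (β+3) (f (β+3)) y / W y)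
        (Set.Ico 0 1) := fun t' _ => by beta_reduce; rw [add_div]; ring
    have hsplitQ : Set.EqOn
        (fun t => (Pop (β+2) (f (β+2)) t + Qop (β+1) (f (β+1)) t) / W t)
        (fun y => Qop (β+1) (f (β+1)) y / W y + Pop (β+2) (f (β+2)) y / W y)
        (Set.Ico 0 1) := fun t' _ => by beta_reduce; rw [add_div]; ring
    rw [Pop_congr hsplitP ht,
      Pop_add (g := fun y => Qop (β+2) (f (β+2)) y / W y)
        (h := fun y => Pop (β+3) (f (β+3)) y / W y)
        ((contDiffOn_Qop (hfsmooth (β+2)) (β+2)).div hWsmooth hWne)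
        ((contDiffOn_Pop (hfsmooth (β+3)) (β+3)).div hWsmooth hWne) ht,
      Qop_congr hsplitQ ht,
      Qop_add (g := fun y => Qop (β+1) (f (β+1)) y / W y)
        (h := fun y => Pop (β+2) (f (β+2)) y / W y)
        ((contDiffOn_Qop (hfsmooth (β+1)) (β+1)).div hWsmooth hWne)
        ((contDiffOn_Pop (hfsmooth (β+2)) (β+2)).div hWsmooth hWne) ht]
    have h3' := h3 (β+1) (by omega) (Complex.normSq z) ht
    linarith [h3']
  · show Pop (N+1+1) (fun t => (Pop (N+1+1) (f (N+1+1)) t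
        + Qop (N+1+1-1) (f (N+1+1-1)) t) / W t) (Complex.normSq z) = 0
    have e2 : f (N+1+1) = 0 := hftail _ (by omega)
    have e1 : f (N+1+1-1) = 0 := by
      have : N+1+1-1 = N+1 := by omega
      rw [this]; exact hftail _ (by omega)
    have he0 : Set.EqOn
        (fun t => (Pop (N+1+1) (f (N+1+1)) t + Qop (N+1+1-1) (f (N+1+1-1)) t) / W t)
        (fun _ => (0:ℝ)) (Set.Ico 0 1) := by
      intro t' ht'
      simp only [e1, e2]
      rw [show ((0:ℝ→ℝ)) = (fun _ => (0:ℝ)) from rfl, Pop_zero ht', Qop_zero ht']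
      simp
    rw [Pop_congr he0 ht]
    exact Pop_zero ht
end

section
/- Let γ be a real number, let β ≥ 1 and k ≥ 0 be integers, and let W_γ(x) = (1−x)^γ on [0,1). Then for every x ∈ [0,1): P_{β+1}( W_γ⁻¹ · Q_β((1−·)^k) )(x) + Q_β( W_γ⁻¹ · P_β((1−·)^k) )(x) = β(β+γ+1−k)(β−k)(2k−γ) · (1−x)^{k−γ−1} + β·( k(k−1)(β+γ+2−k) + (β−k)(k−γ)(k−γ−1) ) · (1−x)^{k−γ−2}, where the powers of 1−x are real powers of the positive number 1−x. -/
/-!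
On `x < 1` both operators map real powers of `1 - x` to explicit combinations of such powers:
`Q_β (1 - x) ^ e = β (β - e) (1 - x) ^ e` and
`P_β (1 - x) ^ e = e (β - e) (1 - x) ^ (e - 1) + e (e - 1) (1 - x) ^ (e - 2)`. Dividing by `W_γ` only shifts exponents by `-γ`,
so both sides are combinations of `(1 - x) ^ (k - γ - 1)` and `(1 - x) ^ (k - γ - 2)`, and the
identity reduces to comparing their polynomial coefficients.
-/

open Topology

/-- `(P_β g)(x) = (1−β)g′(x) + x·g″(x)`. -/
noncomputable def Pd (β : ℕ) (g : ℝ → ℝ) (x : ℝ) : ℝ :=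
  ((1 : ℝ) - β) * deriv g x + x * deriv (deriv g) x

/-- `(Q_β g)(x) = β(β·g(x) + (1−x)g′(x))`. -/
noncomputable def Qd (β : ℕ) (g : ℝ → ℝ) (x : ℝ) : ℝ :=
  (β : ℝ) * ((β : ℝ) * g x + (1 - x) * deriv g x)

section Operators

variable {β : ℕ} {f g : ℝ → ℝ} {x : ℝ}

theorem Pd_eq_of_eventuallyEq (h : f =ᶠ[𝓝 x] g) : Pd β f x = Pd β g x := by
  rw [Pd, Pd, h.deriv_eq, h.deriv.deriv_eq]

theorem Qd_eq_of_eventuallyEq (h : f =ᶠ[𝓝 x] g) : Qd β f x = Qd β g x := by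
  rw [Qd, Qd, h.eq_of_nhds, h.deriv_eq]

theorem Qd_add (hf : DifferentiableAt ℝ f x) (hg : DifferentiableAt ℝ g x) :
    Qd β (fun y => f y + g y) x = Qd β f x + Qd β g x := by
  rw [Qd, Qd, Qd, deriv_fun_add hf hg]
  ring

end Operators

section Monomials

variable {x : ℝ} (c e : ℝ)

theorem hasDerivAt_const_mul_one_sub_rpow (hx : x < 1) :
    HasDerivAt (fun y => c * (1 - y) ^ e) (-(c * e) * (1 - x) ^ (e - 1)) x := by
  have h : HasDerivAt (fun y => c * (1 - y) ^ e) (c * (-1 * e * (1 - x) ^ (e - 1))) x :=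
    (((hasDerivAt_id' x).const_sub 1).rpow_const (Or.inl (sub_pos.2 hx).ne')).const_mul c
  exact h.congr_deriv (by ring)

theorem deriv_const_mul_one_sub_rpow_eventuallyEq (hx : x < 1) :
    deriv (fun y => c * (1 - y) ^ e) =ᶠ[𝓝 x] fun y => -(c * e) * (1 - y) ^ (e - 1) := by
  filter_upwards [Iio_mem_nhds hx] with y hy
  exact (hasDerivAt_const_mul_one_sub_rpow c e hy).deriv

theorem Qd_const_mul_one_sub_rpow (β : ℕ) (hx : x < 1) :
    Qd β (fun y => c * (1 - y) ^ e) x = β * (β - e) * c * (1 - x) ^ e := by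
  have hpos : 0 < 1 - x := sub_pos.2 hx
  have hshift : (1 - x) ^ e = (1 - x) ^ (e - 1) * (1 - x) := by
    rw [← Real.rpow_add_one hpos.ne', sub_add_cancel]
  rw [Qd, (hasDerivAt_const_mul_one_sub_rpow c e hx).deriv, hshift]
  ring

theorem Pd_const_mul_one_sub_rpow (β : ℕ) (hx : x < 1) :
    Pd β (fun y => c * (1 - y) ^ e) x =
      c * e * (β - e) * (1 - x) ^ (e - 1) + c * e * (e - 1) * (1 - x) ^ (e - 2) := by
  have hpos : 0 < 1 - x := sub_pos.2 hx
  rw [Pd, (hasDerivAt_const_mul_one_sub_rpow c e hx).deriv,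
    (deriv_const_mul_one_sub_rpow_eventuallyEq c e hx).deriv_eq,
    (hasDerivAt_const_mul_one_sub_rpow _ _ hx).deriv]
  -- write `x = 1 - (1 - x)` and absorb the factor `1 - x` into `(1 - x) ^ (e - 2)`
  have hshift : (1 - x) ^ (e - 1) = (1 - x) ^ (e - 2) * (1 - x) := by
    rw [← Real.rpow_add_one hpos.ne', show e - 2 + 1 = e - 1 by ring]
  rw [hshift, show e - 1 - 1 = e - 2 by ring]
  ring

end Monomials

theorem one_sub_rpow_neg_mul_rpow {y : ℝ} (hy : y < 1) (γ e : ℝ) :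
    (1 - y) ^ (-γ) * (1 - y) ^ e = (1 - y) ^ (e - γ) := by
  rw [← Real.rpow_add (sub_pos.2 hy)]
  ring_nf

theorem one_sub_pow_eq_one_mul_rpow (k : ℕ) :
    (fun t : ℝ => (1 - t) ^ k) = fun t => 1 * (1 - t) ^ (k : ℝ) := by
  simp only [one_mul, Real.rpow_natCast]

theorem one_sub_rpow_neg_mul_Qd_one_sub_pow (γ : ℝ) (β k : ℕ) {y : ℝ} (hy : y < 1) :
    (1 - y) ^ (-γ) * Qd β (fun t => (1 - t) ^ k) y = β * (β - k) * (1 - y) ^ ((k : ℝ) - γ) := by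
  rw [one_sub_pow_eq_one_mul_rpow, Qd_const_mul_one_sub_rpow _ _ _ hy,
    ← one_sub_rpow_neg_mul_rpow hy γ]
  ring

theorem one_sub_rpow_neg_mul_Pd_one_sub_pow (γ : ℝ) (β k : ℕ) {y : ℝ} (hy : y < 1) :
    (1 - y) ^ (-γ) * Pd β (fun t => (1 - t) ^ k) y =
      k * (β - k) * (1 - y) ^ ((k : ℝ) - γ - 1) + k * (k - 1) * (1 - y) ^ ((k : ℝ) - γ - 2) := by
  rw [one_sub_pow_eq_one_mul_rpow, Pd_const_mul_one_sub_rpow _ _ _ hy,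
    sub_right_comm (k : ℝ) γ 1, sub_right_comm (k : ℝ) γ 2, ← one_sub_rpow_neg_mul_rpow hy γ,
    ← one_sub_rpow_neg_mul_rpow hy γ]
  ring

theorem stmt10_general (γ : ℝ) (β k : ℕ) (x : ℝ) (hx : x ∈ Set.Ico (0 : ℝ) 1) :
    Pd (β + 1) (fun y => (1 - y) ^ (-γ) * Qd β (fun t => (1 - t) ^ k) y) x +
      Qd β (fun y => (1 - y) ^ (-γ) * Pd β (fun t => (1 - t) ^ k) y) x =
    (β : ℝ) * ((β : ℝ) + γ + 1 - (k : ℝ)) * ((β : ℝ) - (k : ℝ)) * (2 * (k : ℝ) - γ) *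
        (1 - x) ^ ((k : ℝ) - γ - 1) +
      (β : ℝ) * ((k : ℝ) * ((k : ℝ) - 1) * ((β : ℝ) + γ + 2 - (k : ℝ)) +
          ((β : ℝ) - (k : ℝ)) * ((k : ℝ) - γ) * ((k : ℝ) - γ - 1)) *
        (1 - x) ^ ((k : ℝ) - γ - 2) := by
  have hx1 : x < 1 := hx.2
  have hnear : ∀ᶠ y in 𝓝 x, y < 1 := Iio_mem_nhds hx1
  rw [Pd_eq_of_eventuallyEq (hnear.mono fun y hy => one_sub_rpow_neg_mul_Qd_one_sub_pow γ β k hy),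
    Qd_eq_of_eventuallyEq (hnear.mono fun y hy => one_sub_rpow_neg_mul_Pd_one_sub_pow γ β k hy),
    Qd_add (hasDerivAt_const_mul_one_sub_rpow _ _ hx1).differentiableAt
      (hasDerivAt_const_mul_one_sub_rpow _ _ hx1).differentiableAt,
    Pd_const_mul_one_sub_rpow _ _ _ hx1, Qd_const_mul_one_sub_rpow _ _ _ hx1,
    Qd_const_mul_one_sub_rpow _ _ _ hx1]
  push_cast
  ring

theorem stmt10 (γ : ℝ) (β k : ℕ) (hβ : 1 ≤ β) (x : ℝ) (hx : x ∈ Set.Ico (0 : ℝ) 1) :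
    Pd (β + 1) (fun y => (1 - y) ^ (-γ) * Qd β (fun t => (1 - t) ^ k) y) x +
      Qd β (fun y => (1 - y) ^ (-γ) * Pd β (fun t => (1 - t) ^ k) y) x =
    (β : ℝ) * ((β : ℝ) + γ + 1 - (k : ℝ)) * ((β : ℝ) - (k : ℝ)) * (2 * (k : ℝ) - γ) *
        (1 - x) ^ ((k : ℝ) - γ - 1) +
      (β : ℝ) * ((k : ℝ) * ((k : ℝ) - 1) * ((β : ℝ) + γ + 2 - (k : ℝ)) +
          ((β : ℝ) - (k : ℝ)) * ((k : ℝ) - γ) * ((k : ℝ) - γ - 1)) *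
        (1 - x) ^ ((k : ℝ) - γ - 2) :=
  stmt10_general γ β k x hx
end
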